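/- arXiv:2012.12913 — 5 statements merged into one kernel-verified Lean document; each statement's English description precedes it below -/
import Mathlib

section
/- Let g be a semisimple Lie algebra, f a nonzero nilpotent element in an sl2-triple s = {e,h,f}, with grading g = ⊕ g_j and depth d. If E ∈ g_j, j ≥ 1, is a nilpotent element of the Z(s)-module g_j (i.e., 0 lies in the Zariski closure of the orbit Z(s)(E)), then the element f + E is a nilpotent element of the Lie algebra g. -/
/-- The algebra of polynomial functions on a vector space `V`: the `F`-subalgebra of
`V → F` generated by the linear functionals. -/
def PolyFuns (F V : Type*) [Field F] [AddCommGroup V] [Module F V] :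
    Subalgebra F (V → F) :=
  Algebra.adjoin F (Set.range fun φ : Module.Dual F V => (φ : V → F))

/-- A subset of `V` is Zariski closed if it is the common zero set of a family of
polynomial functions on `V`. -/
def IsZariskiClosed (F : Type*) {V : Type*} [Field F] [AddCommGroup V] [Module F V]
    (s : Set V) : Prop :=
  ∃ P : Set (V → F), P ⊆ (PolyFuns F V : Set (V → F)) ∧
    s = {v | ∀ p ∈ P, p v = 0}

/-- `v` lies in the Zariski closure of `s`. -/
def MemZariskiClosure (F : Type*) {V : Type*} [Field F] [AddCommGroup V] [Module F V]
    (s : Set V) (v : V) : Prop :=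
  ∀ C : Set V, IsZariskiClosed F C → s ⊆ C → v ∈ C

/-! The characteristic polynomial of `ad (f + x)` depends polynomially on `x` and is invariant
under the automorphisms of `g` fixing `f`. Its value at `E` therefore equals its value at any
point of the Zariski closure of `Z(s)(E)`, in particular at `0`, where it is `X ^ dim g` because
`f` is nilpotent. Hence `ad (f + E)` has characteristic polynomial `X ^ dim g`. -/

open Module Polynomial

namespace PolyFuns

variable {F V : Type*} [Field F] [AddCommGroup V] [Module F V]

lemma const_mem (r : F) : (fun _ : V => r) ∈ PolyFuns F V :=
  Subalgebra.algebraMap_mem _ r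

lemma dual_mem (φ : Dual F V) : (φ : V → F) ∈ PolyFuns F V :=
  Algebra.subset_adjoin ⟨φ, rfl⟩

lemma det_mem {ι : Type*} [Fintype ι] [DecidableEq ι] {M : V → Matrix ι ι F}
    (hM : ∀ i j, (fun x => M x i j) ∈ PolyFuns F V) :
    (fun x => (M x).det) ∈ PolyFuns F V := by
  have hexpand : (fun x => (M x).det) =
      ∑ σ : Equiv.Perm ι, (fun _ : V => ((Equiv.Perm.sign σ : ℤ) : F)) *
        ∏ i, fun x => M x (σ i) i := by
    funext x
    simp [Matrix.det_apply', Finset.sum_apply, Finset.prod_apply]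
  rw [hexpand]
  exact Subalgebra.sum_mem _ fun σ _ =>
    mul_mem (const_mem _) (Subalgebra.prod_mem _ fun i _ => hM _ _)

variable {W : Type*} [AddCommGroup W] [Module F W] [Module.Finite F W]

lemma det_add_mem (A : End F W) (L : V →ₗ[F] End F W) :
    (fun x => (A + L x).det) ∈ PolyFuns F V := by
  classical
  let b := Free.chooseBasis F W
  simp_rw [← LinearMap.det_toMatrix b]
  refine det_mem fun i j => ?_
  have hentry : (fun x => LinearMap.toMatrix b b (A + L x) i j) =
      (fun _ => LinearMap.toMatrix b b A i j) +
        ⇑(Matrix.entryLinearMap F F i j ∘ₗ (LinearMap.toMatrix b b).toLinearMap ∘ₗ L) := by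
    funext x
    simp
  rw [hentry]
  exact add_mem (const_mem _) (dual_mem _)

lemma eval_charpoly_add_mem (A : End F W) (L : V →ₗ[F] End F W) (c : F) :
    (fun x => (A + L x).charpoly.eval c) ∈ PolyFuns F V := by
  have hdet : (fun x => (A + L x).charpoly.eval c) =
      fun x => ((algebraMap F (End F W) c - A) + (-L) x).det := by
    funext x
    rw [LinearMap.eval_charpoly, LinearMap.neg_apply, ← sub_eq_add_neg, sub_add_eq_sub_sub]
  rw [hdet]
  exact det_add_mem _ _

end PolyFuns

lemma MemZariskiClosure.apply_eq {F V : Type*} [Field F] [AddCommGroup V] [Module F V]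
    {s : Set V} {v : V} (hv : MemZariskiClosure F s v) {p : V → F} (hp : p ∈ PolyFuns F V)
    {a : F} (hs : ∀ x ∈ s, p x = a) : p v = a := by
  have hclosed : IsZariskiClosed F {x | p x = a} :=
    ⟨{p - fun _ => a}, by simpa using sub_mem hp (PolyFuns.const_mem a), by
      ext x; simp [sub_eq_zero]⟩
  exact hv _ hclosed hs

lemma LieAlgebra.charpoly_ad_lieEquiv_apply {R L : Type*} [CommRing R] [LieRing L]
    [LieAlgebra R L] [Module.Free R L] [Module.Finite R L] (σ : L ≃ₗ⁅R⁆ L) (x : L) :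
    (ad R L (σ x)).charpoly = (ad R L x).charpoly := by
  rw [← conj_ad_apply, LinearEquiv.charpoly_conj]

theorem cyclic_element_nilpotent_of_nilpotent_orbit_general
    {F : Type*} [Field F] [CharZero F]
    {g : Type*} [LieRing g] [LieAlgebra F g] [Module.Finite F g]
    (e h f : g)
    (hfnil : IsNilpotent ((LieAlgebra.ad F g) f))
    (E : g)
    (hEnil : MemZariskiClosure F
      {x : g | ∃ σ : g ≃ₗ⁅F⁆ g, σ e = e ∧ σ h = h ∧ σ f = f ∧ σ E = x} 0) :
    IsNilpotent ((LieAlgebra.ad F g) (f + E)) := by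
  let P : g → F[X] := fun x => (LieAlgebra.ad F g (f + x)).charpoly
  have hP_inv (σ : g ≃ₗ⁅F⁆ g) (hσf : σ f = f) : P (σ E) = P E := by
    have hσ : f + σ E = σ (f + E) := by rw [map_add, hσf]
    simp only [P, hσ, LieAlgebra.charpoly_ad_lieEquiv_apply]
  have hP_poly (c : F) : (fun x => (P x).eval c) ∈ PolyFuns F g := by
    simpa only [P, map_add, LieHom.coe_toLinearMap] using
      PolyFuns.eval_charpoly_add_mem (LieAlgebra.ad F g f) (LieAlgebra.ad F g : g →ₗ[F] End F g) c
  have hP_zero : P 0 = X ^ finrank F g := by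
    simpa only [P, add_zero] using hfnil.charpoly_eq_X_pow_finrank
  have hP_E : P E = P 0 :=
    Polynomial.funext fun c => (hEnil.apply_eq (hP_poly c) (by
      rintro x ⟨σ, -, -, hσf, rfl⟩
      rw [hP_inv σ hσf])).symm
  exact (LinearMap.isNilpotent_iff_charpoly _).mpr (hP_E.trans hP_zero)

/-- Let `g` be a semisimple Lie algebra, `f` a nonzero nilpotent
element included in an sl₂-triple `s = (e,h,f)`, with grading `g = ⊕ g_j` by the
eigenspaces of `ad h`.  If `E ∈ g_j`, `j ≥ 1`, is a nilpotent element of the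
`Z(s)`-module `g_j` (i.e. `0` lies in the Zariski closure of the orbit `Z(s)(E)`,
where `Z(s)` is the centralizer of the triple in the automorphism group of `g`),
then `f + E` is a nilpotent element of the Lie algebra `g`. -/
theorem cyclic_element_nilpotent_of_nilpotent_orbit
    {F : Type*} [Field F] [IsAlgClosed F] [CharZero F]
    {g : Type*} [LieRing g] [LieAlgebra F g] [Module.Finite F g]
    [LieAlgebra.IsSemisimple F g]
    (e h f : g) (hf0 : f ≠ 0)
    (hhe : ⁅h, e⁆ = 2 • e) (hhf : ⁅h, f⁆ = -(2 • f)) (hef : ⁅e, f⁆ = h)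
    (hfnil : IsNilpotent ((LieAlgebra.ad F g) f))
    (gj : ℤ → Submodule F g)
    (hgj : ∀ n : ℤ, gj n = Module.End.eigenspace ((LieAlgebra.ad F g) h) (n : F))
    (j : ℤ) (hj : 1 ≤ j) (E : g) (hE : E ∈ gj j)
    (hEnil : MemZariskiClosure F
      {x : g | ∃ σ : g ≃ₗ⁅F⁆ g, σ e = e ∧ σ h = h ∧ σ f = f ∧ σ E = x} 0) :
    IsNilpotent ((LieAlgebra.ad F g) (f + E)) :=
  cyclic_element_nilpotent_of_nilpotent_orbit_general e h f hfnil E hEnil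
end

section
/- With the pyramid setup for a nilpotent f ∈ gl_N corresponding to partition p: let x ∈ g_{-2} commute with f. Then for each rectangle V_i of the pyramid (the part of V corresponding to parts equal to p_i), there exists t_i ∈ End(V_{+,i}) such that the block of x mapping V_i to V_i equals Σ_{k=0}^{D_i-1} f^{k+1} t_i (f^T)^k, where D_i = p_i − 1. -/
open Matrix

/-- Boxes of the symmetric pyramid. -/
abbrev PBox (s : ℕ) (p r : Fin s → ℕ) : Type := Σ i : Fin s, Fin (r i) × Fin (p i)

variable {F : Type*} [Field F]

/-- The `x`-coordinate (the `ad h` degree) of a box. -/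
def pdeg {s : ℕ} {p r : Fin s → ℕ} (b : PBox s p r) : ℤ :=
  (p b.1 : ℤ) - 1 - 2 * (b.2.2 : ℤ)

/-- The left-shift operator `f`. -/
def shiftL {s : ℕ} (p r : Fin s → ℕ) : Matrix (PBox s p r) (PBox s p r) F :=
  fun b' b => if b'.1 = b.1 ∧ (b'.2.1 : ℕ) = (b.2.1 : ℕ) ∧
      (b'.2.2 : ℕ) = (b.2.2 : ℕ) + 1 then 1 else 0

/-- The right-shift operator `fᵀ`. -/
def shiftR {s : ℕ} (p r : Fin s → ℕ) : Matrix (PBox s p r) (PBox s p r) F :=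
  fun b' b => if b'.1 = b.1 ∧ (b'.2.1 : ℕ) = (b.2.1 : ℕ) ∧
      (b'.2.2 : ℕ) + 1 = (b.2.2 : ℕ) then 1 else 0

/-- Projection onto the `i`-th rectangle `V_i`. -/
def projRect {s : ℕ} (p r : Fin s → ℕ) (i : Fin s) :
    Matrix (PBox s p r) (PBox s p r) F :=
  fun b' b => if b' = b ∧ b.1 = i then 1 else 0

-- helpers
lemma pbox_eq {s : ℕ} {p r : Fin s → ℕ} {b' b : PBox s p r} (h1 : b'.1 = b.1)
    (h2 : (b'.2.1 : ℕ) = b.2.1) (h3 : (b'.2.2 : ℕ) = b.2.2) : b' = b := by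
  obtain ⟨i', a', c'⟩ := b'; obtain ⟨i, a, c⟩ := b
  dsimp at h1 h2 h3; subst h1
  exact congrArg _ (Prod.ext (Fin.ext h2) (Fin.ext h3))

def shiftBox {s : ℕ} {p r : Fin s → ℕ} (b : PBox s p r) (m : ℕ) : PBox s p r :=
  ⟨b.1, b.2.1, ⟨(b.2.2 : ℕ) - m, lt_of_le_of_lt (Nat.sub_le _ _) b.2.2.isLt⟩⟩

@[simp] lemma shiftBox_fst {s : ℕ} {p r : Fin s → ℕ} (b : PBox s p r) (m : ℕ) :
    (shiftBox b m).1 = b.1 := rfl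
@[simp] lemma shiftBox_row {s : ℕ} {p r : Fin s → ℕ} (b : PBox s p r) (m : ℕ) :
    ((shiftBox b m).2.1 : ℕ) = b.2.1 := rfl
@[simp] lemma shiftBox_col {s : ℕ} {p r : Fin s → ℕ} (b : PBox s p r) (m : ℕ) :
    ((shiftBox b m).2.2 : ℕ) = (b.2.2 : ℕ) - m := rfl

lemma shiftBox_zero {s : ℕ} {p r : Fin s → ℕ} (b : PBox s p r) : shiftBox b 0 = b :=
  pbox_eq rfl rfl (by simp)

lemma shiftBox_shiftBox {s : ℕ} {p r : Fin s → ℕ} (b : PBox s p r) (m k : ℕ) :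
    shiftBox (shiftBox b m) k = shiftBox b (m + k) :=
  pbox_eq rfl rfl (by simp [Nat.sub_sub])

lemma pyrL_mul {s : ℕ} (p r : Fin s → ℕ) (y : Matrix (PBox s p r) (PBox s p r) F)
    (b' b : PBox s p r) :
    (shiftL p r * y : Matrix (PBox s p r) (PBox s p r) F) b' b =
      if 1 ≤ (b'.2.2 : ℕ) then y (shiftBox b' 1) b else 0 := by
  rw [Matrix.mul_apply]
  by_cases h : 1 ≤ (b'.2.2 : ℕ)
  · rw [if_pos h, Fintype.sum_eq_single (shiftBox b' 1)]
    · rw [shiftL, if_pos, one_mul]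
      refine ⟨rfl, rfl, ?_⟩
      show (b'.2.2 : ℕ) = (b'.2.2 : ℕ) - 1 + 1
      omega
    · intro u hu
      rw [shiftL, if_neg, zero_mul]
      rintro ⟨e1, e2, e3⟩
      refine hu (pbox_eq e1.symm e2.symm ?_)
      show (u.2.2 : ℕ) = (b'.2.2 : ℕ) - 1
      omega
  · rw [if_neg h]
    apply Finset.sum_eq_zero
    intro u _
    rw [shiftL, if_neg, zero_mul]
    rintro ⟨e1, e2, e3⟩; omega

lemma pyrMul_R {s : ℕ} (p r : Fin s → ℕ) (y : Matrix (PBox s p r) (PBox s p r) F)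
    (b' b : PBox s p r) :
    (y * shiftR p r : Matrix (PBox s p r) (PBox s p r) F) b' b =
      if 1 ≤ (b.2.2 : ℕ) then y b' (shiftBox b 1) else 0 := by
  rw [Matrix.mul_apply]
  by_cases h : 1 ≤ (b.2.2 : ℕ)
  · rw [if_pos h, Fintype.sum_eq_single (shiftBox b 1)]
    · rw [shiftR, if_pos, mul_one]
      refine ⟨rfl, rfl, ?_⟩
      show (b.2.2 : ℕ) - 1 + 1 = (b.2.2 : ℕ)
      omega
    · intro u hu
      rw [shiftR, if_neg, mul_zero]
      rintro ⟨e1, e2, e3⟩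
      refine hu (pbox_eq e1 e2 ?_)
      show (u.2.2 : ℕ) = (b.2.2 : ℕ) - 1
      omega
  · rw [if_neg h]
    apply Finset.sum_eq_zero
    intro u _
    rw [shiftR, if_neg, mul_zero]
    rintro ⟨e1, e2, e3⟩; omega

lemma pyrMul_L {s : ℕ} (p r : Fin s → ℕ) (y : Matrix (PBox s p r) (PBox s p r) F)
    (b' b : PBox s p r) :
    (y * shiftL p r : Matrix (PBox s p r) (PBox s p r) F) b' b =
      if h : (b.2.2 : ℕ) + 1 < p b.1 then y b' ⟨b.1, b.2.1, ⟨(b.2.2 : ℕ) + 1, h⟩⟩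
      else 0 := by
  rw [Matrix.mul_apply]
  by_cases h : (b.2.2 : ℕ) + 1 < p b.1
  · rw [dif_pos h, Fintype.sum_eq_single (⟨b.1, b.2.1, ⟨(b.2.2 : ℕ) + 1, h⟩⟩ : PBox s p r)]
    · rw [shiftL, if_pos ⟨rfl, rfl, rfl⟩, mul_one]
    · intro u hu
      rw [shiftL, if_neg, mul_zero]
      rintro ⟨e1, e2, e3⟩
      exact hu (pbox_eq e1 e2 e3)
  · rw [dif_neg h]
    apply Finset.sum_eq_zero
    intro u _
    rw [shiftL, if_neg, mul_zero]
    rintro ⟨e1, e2, e3⟩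
    have hlt : (u.2.2 : ℕ) < p b.1 := by rw [← e1]; exact u.2.2.isLt
    omega

lemma pyrR_mul {s : ℕ} (p r : Fin s → ℕ) (y : Matrix (PBox s p r) (PBox s p r) F)
    (b' b : PBox s p r) :
    (shiftR p r * y : Matrix (PBox s p r) (PBox s p r) F) b' b =
      if h : (b'.2.2 : ℕ) + 1 < p b'.1 then y ⟨b'.1, b'.2.1, ⟨(b'.2.2 : ℕ) + 1, h⟩⟩ b
      else 0 := by
  rw [Matrix.mul_apply]
  by_cases h : (b'.2.2 : ℕ) + 1 < p b'.1
  · rw [dif_pos h, Fintype.sum_eq_single (⟨b'.1, b'.2.1, ⟨(b'.2.2 : ℕ) + 1, h⟩⟩ : PBox s p r)]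
    · rw [shiftR, if_pos ⟨rfl, rfl, rfl⟩, one_mul]
    · intro u hu
      rw [shiftR, if_neg, zero_mul]
      rintro ⟨e1, e2, e3⟩
      exact hu (pbox_eq e1.symm e2.symm e3.symm)
  · rw [dif_neg h]
    apply Finset.sum_eq_zero
    intro u _
    rw [shiftR, if_neg, zero_mul]
    rintro ⟨e1, e2, e3⟩
    have hlt : (u.2.2 : ℕ) < p b'.1 := by rw [e1]; exact u.2.2.isLt
    omega

lemma pyrLpow_mul {s : ℕ} (p r : Fin s → ℕ) (m : ℕ) (y : Matrix (PBox s p r) (PBox s p r) F)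
    (b' b : PBox s p r) :
    (shiftL p r ^ m * y : Matrix (PBox s p r) (PBox s p r) F) b' b =
      if m ≤ (b'.2.2 : ℕ) then y (shiftBox b' m) b else 0 := by
  induction m generalizing y b' with
  | zero => simp [shiftBox_zero]
  | succ m ih =>
    rw [pow_succ', mul_assoc, pyrL_mul]
    by_cases h1 : 1 ≤ (b'.2.2 : ℕ)
    · rw [if_pos h1, ih, shiftBox_shiftBox]
      simp only [shiftBox_col]
      by_cases h2 : m ≤ (b'.2.2 : ℕ) - 1
      · erw [if_pos h2, if_pos (by omega), Nat.add_comm 1 m]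
      · erw [if_neg h2, if_neg (by omega)]
    · rw [if_neg h1, if_neg (by omega)]

lemma pyrMul_Rpow {s : ℕ} (p r : Fin s → ℕ) (k : ℕ) (y : Matrix (PBox s p r) (PBox s p r) F)
    (b' b : PBox s p r) :
    (y * shiftR p r ^ k : Matrix (PBox s p r) (PBox s p r) F) b' b =
      if k ≤ (b.2.2 : ℕ) then y b' (shiftBox b k) else 0 := by
  induction k generalizing y b with
  | zero => simp [shiftBox_zero]
  | succ k ih =>
    rw [pow_succ, ← mul_assoc, pyrMul_R]
    by_cases h1 : 1 ≤ (b.2.2 : ℕ)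
    · rw [if_pos h1, ih, shiftBox_shiftBox]
      simp only [shiftBox_col]
      by_cases h2 : k ≤ (b.2.2 : ℕ) - 1
      · erw [if_pos h2, if_pos (by omega), Nat.add_comm 1 k]
      · erw [if_neg h2, if_neg (by omega)]
    · rw [if_neg h1, if_neg (by omega)]

lemma pyrP_mul {s : ℕ} (p r : Fin s → ℕ) (i : Fin s) (y : Matrix (PBox s p r) (PBox s p r) F)
    (b' b : PBox s p r) :
    (projRect p r i * y : Matrix (PBox s p r) (PBox s p r) F) b' b = if b'.1 = i then y b' b else 0 := by
  rw [Matrix.mul_apply]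
  by_cases h : b'.1 = i
  · rw [if_pos h, Fintype.sum_eq_single b']
    · rw [projRect, if_pos ⟨rfl, h⟩, one_mul]
    · intro u hu
      rw [projRect, if_neg, zero_mul]
      rintro ⟨e1, _⟩
      exact hu e1.symm
  · rw [if_neg h]
    apply Finset.sum_eq_zero
    intro u _
    rw [projRect, if_neg, zero_mul]
    rintro ⟨e1, e2⟩
    exact h (e1 ▸ e2)

lemma pyrMul_P {s : ℕ} (p r : Fin s → ℕ) (i : Fin s) (y : Matrix (PBox s p r) (PBox s p r) F)
    (b' b : PBox s p r) :
    (y * projRect p r i : Matrix (PBox s p r) (PBox s p r) F) b' b = if b.1 = i then y b' b else 0 := by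
  rw [Matrix.mul_apply]
  by_cases h : b.1 = i
  · rw [if_pos h, Fintype.sum_eq_single b]
    · rw [projRect, if_pos ⟨rfl, h⟩, mul_one]
    · intro u hu
      rw [projRect, if_neg, mul_zero]
      rintro ⟨e1, _⟩
      exact hu e1
  · rw [if_neg h]
    apply Finset.sum_eq_zero
    intro u _
    rw [projRect, if_neg, mul_zero]
    rintro ⟨_, e2⟩
    exact h e2

lemma pyr_const_col {s : ℕ} {p r : Fin s → ℕ}
    {x : Matrix (PBox s p r) (PBox s p r) F}
    (hxcomm : x * shiftL p r = shiftL p r * x)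
    (i : Fin s) (a' a : Fin (r i)) :
    ∀ c (hc : c + 1 < p i),
      x ⟨i, a', ⟨c + 1, hc⟩⟩ ⟨i, a, ⟨c, by omega⟩⟩ =
      x ⟨i, a', ⟨1, by omega⟩⟩ ⟨i, a, ⟨0, by omega⟩⟩ := by
  intro c
  induction c with
  | zero => intro hc; rfl
  | succ c ih =>
    intro hc
    have hcomm : (x * shiftL p r : Matrix (PBox s p r) (PBox s p r) F)
          ⟨i, a', ⟨c + 2, hc⟩⟩ ⟨i, a, ⟨c, by omega⟩⟩ =
        (shiftL p r * x : Matrix (PBox s p r) (PBox s p r) F)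
          ⟨i, a', ⟨c + 2, hc⟩⟩ ⟨i, a, ⟨c, by omega⟩⟩ := by
      rw [hxcomm]
    rw [pyrMul_L, pyrL_mul] at hcomm
    rw [dif_pos (show (c : ℕ) + 1 < p i by omega)] at hcomm
    rw [if_pos (show 1 ≤ c + 2 by omega)] at hcomm
    have hbox : (shiftBox (⟨i, a', ⟨c + 2, hc⟩⟩ : PBox s p r) 1) =
        ⟨i, a', ⟨c + 1, by omega⟩⟩ := pbox_eq rfl rfl (by simp)
    rw [hbox] at hcomm
    refine Eq.trans ?_ (ih (by omega))
    exact hcomm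

/-- Let `x ∈ g_{-2}` commute with `f`.  Then for each rectangle
`V_i` of the pyramid there exists `t_i ∈ End(V_{+,i})` (a matrix supported on the
rightmost column of rectangle `i`) such that the compression of `x` to `V_i` equals
`Σ_{k=0}^{D_i-1} f^{k+1} t_i (fᵀ)^k`, where `D_i = p_i − 1`. -/
theorem compression_of_centralizing_degree_neg_two
    {s : ℕ} (p r : Fin s → ℕ) (hp : StrictAnti p)
    (x : Matrix (PBox s p r) (PBox s p r) F)
    (hxdeg : ∀ b' b : PBox s p r, pdeg b' - pdeg b ≠ -2 → x b' b = 0)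
    (hxcomm : x * shiftL p r = shiftL p r * x)
    (i : Fin s) :
    ∃ t : Matrix (PBox s p r) (PBox s p r) F,
      (∀ b' b : PBox s p r, t b' b ≠ 0 →
        b'.1 = i ∧ b.1 = i ∧ (b'.2.2 : ℕ) = 0 ∧ (b.2.2 : ℕ) = 0) ∧
      projRect p r i * x * projRect p r i =
        ∑ k ∈ Finset.range (p i - 1),
          shiftL p r ^ (k + 1) * t * shiftR p r ^ k := by
  classical
  set t : Matrix (PBox s p r) (PBox s p r) F := fun b' b =>
    if b'.1 = i ∧ b.1 = i ∧ (b'.2.2 : ℕ) = 0 ∧ (b.2.2 : ℕ) = 0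
    then (shiftR p r * x : Matrix (PBox s p r) (PBox s p r) F) b' b else 0 with ht
  have htval : ∀ (a' a : Fin (r i)) (h0 : 0 < p i) (h1 : 1 < p i),
      t ⟨i, (a', ⟨0, h0⟩)⟩ ⟨i, (a, ⟨0, h0⟩)⟩ = x ⟨i, (a', ⟨1, h1⟩)⟩ ⟨i, (a, ⟨0, h0⟩)⟩ := by
    intro a' a h0 h1
    simp only [ht]
    rw [if_pos (by simp), pyrR_mul]
    have hcond : ((⟨i, (a', ⟨0, h0⟩)⟩ : PBox s p r).2.2 : ℕ) + 1 <
        p (⟨i, (a', ⟨0, h0⟩)⟩ : PBox s p r).1 := h1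
    rw [dif_pos hcond]
  refine ⟨t, ?_, ?_⟩
  · intro b' b h
    by_cases hC : b'.1 = i ∧ b.1 = i ∧ (b'.2.2 : ℕ) = 0 ∧ (b.2.2 : ℕ) = 0
    · exact hC
    · simp only [ht, if_neg hC] at h
      exact absurd rfl h
  · ext b' b
    rw [pyrMul_P, pyrP_mul, Matrix.sum_apply]
    have hterm : ∀ k, (shiftL p r ^ (k + 1) * t * shiftR p r ^ k :
          Matrix (PBox s p r) (PBox s p r) F) b' b =
        if k + 1 ≤ (b'.2.2 : ℕ) ∧ k ≤ (b.2.2 : ℕ)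
        then t (shiftBox b' (k + 1)) (shiftBox b k) else 0 := by
      intro k
      rw [mul_assoc, pyrLpow_mul]
      by_cases h1 : k + 1 ≤ (b'.2.2 : ℕ)
      · rw [if_pos h1, pyrMul_Rpow]
        by_cases h2 : k ≤ (b.2.2 : ℕ)
        · rw [if_pos h2, if_pos ⟨h1, h2⟩]
        · rw [if_neg h2, if_neg (by tauto)]
      · rw [if_neg h1, if_neg (by tauto)]
    rw [Finset.sum_congr rfl fun k _ => hterm k]
    obtain ⟨i1, a', c'⟩ := b'
    obtain ⟨i2, a, c⟩ := b
    dsimp only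
    by_cases hb' : i1 = i
    · subst hb'
      by_cases hb : i2 = i1
      · subst hb
        by_cases hcc : (c' : ℕ) = (c : ℕ) + 1
        · -- main diagonal case
          have hclt : (c' : ℕ) < p i2 := c'.isLt
          have hmem : (c : ℕ) ∈ Finset.range (p i2 - 1) := Finset.mem_range.mpr (by omega)
          have hside : ∀ k ∈ Finset.range (p i2 - 1), k ≠ (c : ℕ) →
              (if k + 1 ≤ (c' : ℕ) ∧ k ≤ (c : ℕ)
              then t (shiftBox ⟨i2, (a', c')⟩ (k + 1)) (shiftBox ⟨i2, (a, c)⟩ k)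
              else 0) = 0 := by
            intro k _ hkc
            split_ifs with h1
            · simp only [ht]
              refine if_neg ?_
              rintro ⟨-, -, h3, h4⟩
              simp only [shiftBox_col] at h3 h4
              omega
            · rfl
          rw [if_pos rfl, if_pos rfl, Finset.sum_eq_single_of_mem (c : ℕ) hmem hside]
          rw [if_pos ⟨by omega, le_refl _⟩]
          have e1 : shiftBox (⟨i2, (a', c')⟩ : PBox s p r) ((c : ℕ) + 1) =
              ⟨i2, (a', ⟨0, by omega⟩)⟩ :=
            pbox_eq rfl rfl (by simp only [shiftBox_col]; omega)
          have e2 : shiftBox (⟨i2, (a, c)⟩ : PBox s p r) (c : ℕ) =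
              ⟨i2, (a, ⟨0, by omega⟩)⟩ :=
            pbox_eq rfl rfl (by simp only [shiftBox_col]; omega)
          rw [e1, e2, htval a' a (by omega) (by omega)]
          have ec : (⟨i2, (a', c')⟩ : PBox s p r) = ⟨i2, (a', ⟨(c : ℕ) + 1, by omega⟩)⟩ :=
            pbox_eq rfl rfl hcc
          rw [ec]
          exact pyr_const_col hxcomm i2 a' a (c : ℕ) (by omega)
        · -- off-diagonal: both sides vanish
          rw [if_pos rfl, if_pos rfl]
          rw [hxdeg ⟨i2, (a', c')⟩ ⟨i2, (a, c)⟩ (by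
            simp only [pdeg]; push_cast; omega)]
          symm
          apply Finset.sum_eq_zero
          intro k _
          split_ifs with h1
          · simp only [ht]
            refine if_neg ?_
            rintro ⟨-, -, h3, h4⟩
            simp only [shiftBox_col] at h3 h4
            omega
          · rfl
      · -- b not in rectangle i
        rw [if_neg hb]
        symm
        apply Finset.sum_eq_zero
        intro k _
        split_ifs with h1
        · simp only [ht]
          refine if_neg ?_
          rintro ⟨-, h2, -⟩
          exact hb (by simpa using h2)
        · rfl
    · -- b' not in rectangle i
      rw [if_neg hb', ite_self]
      symm
      apply Finset.sum_eq_zero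
      intro k _
      split_ifs with h1
      · simp only [ht]
        refine if_neg ?_
        rintro ⟨h2, -⟩
        exact hb' (by simpa using h2)
      · rfl
end

section
/- With the pyramid setup for nilpotent f ∈ gl_N: if x ∈ g_{-1} satisfies x ∈ Hom(V_j, V_i) with i < j (so rectangle i is longer than rectangle j), then y = Σ_{k≥0} (f^T)^{k+1} x f^k satisfies [f, y] = x; if instead i > j, then y = −Σ_{k≥0} f^k x (f^T)^{k+1} satisfies [f, y] = x. -/
open Matrix

variable {F : Type*} [Field F]

section Helpers
variable {s : ℕ} {p r : Fin s → ℕ}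

lemma pbox_ext {b' b : PBox s p r} (h1 : b'.1 = b.1) (h2 : (b'.2.1 : ℕ) = (b.2.1 : ℕ))
    (h3 : (b'.2.2 : ℕ) = (b.2.2 : ℕ)) : b' = b := by
  obtain ⟨i1, r1, c1⟩ := b'
  obtain ⟨i2, r2, c2⟩ := b
  dsimp at h1
  subst h1
  simp only [Sigma.mk.inj_iff, heq_eq_eq, Prod.mk.injEq, true_and]
  exact ⟨Fin.ext h2, Fin.ext h3⟩

lemma mul_shiftL (B : Matrix (PBox s p r) (PBox s p r) F) (b' b : PBox s p r) :
    (B * shiftL p r : Matrix (PBox s p r) (PBox s p r) F) b' b =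
      if h : (b.2.2 : ℕ) + 1 < p b.1 then B b' ⟨b.1, (b.2.1, ⟨(b.2.2 : ℕ) + 1, h⟩)⟩ else 0 := by
  rw [Matrix.mul_apply]
  by_cases h : (b.2.2 : ℕ) + 1 < p b.1
  · rw [dif_pos h]
    have key : ∀ c : PBox s p r, shiftL p r (F := F) c b =
        if c = ⟨b.1, (b.2.1, ⟨(b.2.2 : ℕ) + 1, h⟩)⟩ then 1 else 0 := by
      intro c
      simp only [shiftL]
      by_cases hc : c = ⟨b.1, (b.2.1, ⟨(b.2.2 : ℕ) + 1, h⟩)⟩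
      · subst hc; rw [if_pos ⟨rfl, rfl, rfl⟩, if_pos rfl]
      · rw [if_neg, if_neg hc]
        rintro ⟨h1, h2, h3⟩
        exact hc (pbox_ext h1 h2 (by dsimp; omega))
    simp only [key, mul_ite, mul_one, mul_zero, Finset.sum_ite_eq', Finset.mem_univ, if_true]
  · rw [dif_neg h]
    apply Finset.sum_eq_zero
    intro c _
    simp only [shiftL]
    rw [if_neg, mul_zero]
    rintro ⟨h1, h2, h3⟩
    have hlt := c.2.2.isLt
    have hpp : p c.1 = p b.1 := by rw [h1]
    omega

lemma shiftL_mul (B : Matrix (PBox s p r) (PBox s p r) F) (b' b : PBox s p r) :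
    (shiftL p r * B : Matrix (PBox s p r) (PBox s p r) F) b' b =
      if h : 1 ≤ (b'.2.2 : ℕ) then
        B ⟨b'.1, (b'.2.1, ⟨(b'.2.2 : ℕ) - 1, by have := b'.2.2.isLt; omega⟩)⟩ b else 0 := by
  rw [Matrix.mul_apply]
  by_cases h : 1 ≤ (b'.2.2 : ℕ)
  · rw [dif_pos h]
    have key : ∀ c : PBox s p r, shiftL p r (F := F) b' c =
        if c = ⟨b'.1, (b'.2.1, ⟨(b'.2.2 : ℕ) - 1, by have := b'.2.2.isLt; omega⟩)⟩
        then 1 else 0 := by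
      intro c
      simp only [shiftL]
      by_cases hc : c = ⟨b'.1, (b'.2.1, ⟨(b'.2.2 : ℕ) - 1, by have := b'.2.2.isLt; omega⟩)⟩
      · subst hc; rw [if_pos ⟨rfl, rfl, by dsimp; omega⟩, if_pos rfl]
      · rw [if_neg, if_neg hc]
        rintro ⟨h1, h2, h3⟩
        exact hc (pbox_ext h1.symm h2.symm (by dsimp; omega))
    simp only [key, ite_mul, one_mul, zero_mul, Finset.sum_ite_eq, Finset.sum_ite_eq', Finset.mem_univ, if_true]
  · rw [dif_neg h]
    apply Finset.sum_eq_zero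
    intro c _
    simp only [shiftL]
    rw [if_neg, zero_mul]
    rintro ⟨h1, h2, h3⟩
    omega

lemma shiftR_mul (B : Matrix (PBox s p r) (PBox s p r) F) (b' b : PBox s p r) :
    (shiftR p r * B : Matrix (PBox s p r) (PBox s p r) F) b' b =
      if h : (b'.2.2 : ℕ) + 1 < p b'.1 then
        B ⟨b'.1, (b'.2.1, ⟨(b'.2.2 : ℕ) + 1, h⟩)⟩ b else 0 := by
  rw [Matrix.mul_apply]
  by_cases h : (b'.2.2 : ℕ) + 1 < p b'.1
  · rw [dif_pos h]
    have key : ∀ c : PBox s p r, shiftR p r (F := F) b' c =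
        if c = ⟨b'.1, (b'.2.1, ⟨(b'.2.2 : ℕ) + 1, h⟩)⟩ then 1 else 0 := by
      intro c
      simp only [shiftR]
      by_cases hc : c = ⟨b'.1, (b'.2.1, ⟨(b'.2.2 : ℕ) + 1, h⟩)⟩
      · subst hc; rw [if_pos ⟨rfl, rfl, rfl⟩, if_pos rfl]
      · rw [if_neg, if_neg hc]
        rintro ⟨h1, h2, h3⟩
        exact hc (pbox_ext h1.symm h2.symm (by dsimp; omega))
    simp only [key, ite_mul, one_mul, zero_mul, Finset.sum_ite_eq, Finset.sum_ite_eq', Finset.mem_univ, if_true]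
  · rw [dif_neg h]
    apply Finset.sum_eq_zero
    intro c _
    simp only [shiftR]
    rw [if_neg, zero_mul]
    rintro ⟨h1, h2, h3⟩
    have hlt := c.2.2.isLt
    have hpp : p c.1 = p b'.1 := by rw [h1]
    omega

lemma mul_shiftR (B : Matrix (PBox s p r) (PBox s p r) F) (b' b : PBox s p r) :
    (B * shiftR p r : Matrix (PBox s p r) (PBox s p r) F) b' b =
      if h : 1 ≤ (b.2.2 : ℕ) then
        B b' ⟨b.1, (b.2.1, ⟨(b.2.2 : ℕ) - 1, by have := b.2.2.isLt; omega⟩)⟩ else 0 := by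
  rw [Matrix.mul_apply]
  by_cases h : 1 ≤ (b.2.2 : ℕ)
  · rw [dif_pos h]
    have key : ∀ c : PBox s p r, shiftR p r (F := F) c b =
        if c = ⟨b.1, (b.2.1, ⟨(b.2.2 : ℕ) - 1, by have := b.2.2.isLt; omega⟩)⟩
        then 1 else 0 := by
      intro c
      simp only [shiftR]
      by_cases hc : c = ⟨b.1, (b.2.1, ⟨(b.2.2 : ℕ) - 1, by have := b.2.2.isLt; omega⟩)⟩
      · subst hc; rw [if_pos ⟨rfl, rfl, by dsimp; omega⟩, if_pos rfl]
      · rw [if_neg, if_neg hc]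
        rintro ⟨h1, h2, h3⟩
        exact hc (pbox_ext h1 h2 (by dsimp; omega))
    simp only [key, mul_ite, mul_one, mul_zero, Finset.sum_ite_eq', Finset.mem_univ, if_true]
  · rw [dif_neg h]
    apply Finset.sum_eq_zero
    intro c _
    simp only [shiftR]
    rw [if_neg, mul_zero]
    rintro ⟨h1, h2, h3⟩
    omega


lemma mul_shiftL_pow (B : Matrix (PBox s p r) (PBox s p r) F) (k : ℕ) (b' b : PBox s p r) :
    (B * shiftL p r ^ k : Matrix (PBox s p r) (PBox s p r) F) b' b =
      if h : (b.2.2 : ℕ) + k < p b.1 then B b' ⟨b.1, (b.2.1, ⟨(b.2.2 : ℕ) + k, h⟩)⟩ else 0 := by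
  induction k generalizing b with
  | zero =>
    rw [pow_zero, mul_one, dif_pos (by have := b.2.2.isLt; omega)]
    rfl
  | succ k ih =>
    rw [pow_succ, ← mul_assoc, mul_shiftL]
    by_cases h : (b.2.2 : ℕ) + 1 < p b.1
    · rw [dif_pos h, ih]
      split_ifs with hA hB hB
      · congr 1
        exact pbox_ext rfl rfl (by dsimp at hA ⊢; omega)
      · exact absurd hB (by dsimp at hA; omega)
      · exact absurd hA (by dsimp; omega)
      · rfl
    · rw [dif_neg h, dif_neg (by omega)]

lemma pow_shiftR_mul (B : Matrix (PBox s p r) (PBox s p r) F) (k : ℕ) (b' b : PBox s p r) :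
    (shiftR p r ^ k * B : Matrix (PBox s p r) (PBox s p r) F) b' b =
      if h : (b'.2.2 : ℕ) + k < p b'.1 then B ⟨b'.1, (b'.2.1, ⟨(b'.2.2 : ℕ) + k, h⟩)⟩ b else 0 := by
  induction k generalizing b' with
  | zero =>
    rw [pow_zero, one_mul, dif_pos (by have := b'.2.2.isLt; omega)]
    rfl
  | succ k ih =>
    rw [pow_succ', mul_assoc, shiftR_mul]
    by_cases h : (b'.2.2 : ℕ) + 1 < p b'.1
    · rw [dif_pos h, ih]
      split_ifs with hA hB hB
      · congr 1
        exact pbox_ext rfl rfl (by dsimp at hA ⊢; omega)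
      · exact absurd hB (by dsimp at hA; omega)
      · exact absurd hA (by dsimp; omega)
      · rfl
    · rw [dif_neg h, dif_neg (by omega)]

lemma pow_shiftL_mul (B : Matrix (PBox s p r) (PBox s p r) F) (k : ℕ) (b' b : PBox s p r) :
    (shiftL p r ^ k * B : Matrix (PBox s p r) (PBox s p r) F) b' b =
      if h : k ≤ (b'.2.2 : ℕ) then
        B ⟨b'.1, (b'.2.1, ⟨(b'.2.2 : ℕ) - k, by have := b'.2.2.isLt; omega⟩)⟩ b else 0 := by
  induction k generalizing b' with
  | zero =>
    rw [pow_zero, one_mul, dif_pos (by omega)]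
    rfl
  | succ k ih =>
    rw [pow_succ', mul_assoc, shiftL_mul]
    by_cases h : 1 ≤ (b'.2.2 : ℕ)
    · rw [dif_pos h, ih]
      split_ifs with hA hB hB
      · congr 1
        exact pbox_ext rfl rfl (by dsimp at hA ⊢; omega)
      · exact absurd hB (by dsimp at hA; omega)
      · exact absurd hA (by dsimp; omega)
      · rfl
    · rw [dif_neg h, dif_neg (by omega)]

lemma mul_pow_shiftR (B : Matrix (PBox s p r) (PBox s p r) F) (k : ℕ) (b' b : PBox s p r) :
    (B * shiftR p r ^ k : Matrix (PBox s p r) (PBox s p r) F) b' b =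
      if h : k ≤ (b.2.2 : ℕ) then
        B b' ⟨b.1, (b.2.1, ⟨(b.2.2 : ℕ) - k, by have := b.2.2.isLt; omega⟩)⟩ else 0 := by
  induction k generalizing b with
  | zero =>
    rw [pow_zero, mul_one, dif_pos (by omega)]
    rfl
  | succ k ih =>
    rw [pow_succ, ← mul_assoc, mul_shiftR]
    by_cases h : 1 ≤ (b.2.2 : ℕ)
    · rw [dif_pos h, ih]
      split_ifs with hA hB hB
      · congr 1
        exact pbox_ext rfl rfl (by dsimp at hA ⊢; omega)
      · exact absurd hB (by dsimp at hA; omega)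
      · exact absurd hA (by dsimp; omega)
      · rfl
    · rw [dif_neg h, dif_neg (by omega)]

end Helpers

section Helpers2
variable {s : ℕ} {p r : Fin s → ℕ}

/-- Total entry function: `x` evaluated at natural-number column coordinates. -/
def entE (x : Matrix (PBox s p r) (PBox s p r) F) (i j : Fin s) (u : Fin (r i)) (v : Fin (r j))
    (A C : ℕ) : F :=
  if h : A < p i ∧ C < p j then x ⟨i, (u, ⟨A, h.1⟩)⟩ ⟨j, (v, ⟨C, h.2⟩)⟩ else 0

lemma entE_eq (x : Matrix (PBox s p r) (PBox s p r) F) (i j : Fin s) (u : Fin (r i))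
    (v : Fin (r j)) (A C : ℕ) (h1 : A < p i) (h2 : C < p j) :
    entE x i j u v A C = x ⟨i, (u, ⟨A, h1⟩)⟩ ⟨j, (v, ⟨C, h2⟩)⟩ := by
  rw [entE, dif_pos ⟨h1, h2⟩]

lemma entE_of_ge {x : Matrix (PBox s p r) (PBox s p r) F} {i j : Fin s} {u : Fin (r i)}
    {v : Fin (r j)} {A C : ℕ} (h : ¬(A < p i ∧ C < p j)) : entE x i j u v A C = 0 :=
  dif_neg h

lemma entE_deg {x : Matrix (PBox s p r) (PBox s p r) F}
    (hxdeg : ∀ b' b : PBox s p r, pdeg b' - pdeg b ≠ -1 → x b' b = 0)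
    {i j : Fin s} {u : Fin (r i)} {v : Fin (r j)} {A C : ℕ}
    (h : ((p i : ℤ) - 1 - 2 * (A : ℤ)) - ((p j : ℤ) - 1 - 2 * (C : ℤ)) ≠ -1) :
    entE x i j u v A C = 0 := by
  rw [entE]
  split_ifs with hh
  · apply hxdeg
    simp only [pdeg]
    try dsimp only
    omega
  · rfl

end Helpers2


/-- If `x ∈ g_{-1}` maps the `j`-th rectangle to the `i`-th rectangle
with `i < j` (rectangle `i` longer), then `y = Σ_{k≥0} (fᵀ)^{k+1} x f^k` satisfies
`[f, y] = x`; if instead `i > j`, then `y = −Σ_{k≥0} f^k x (fᵀ)^{k+1}` satisfies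
`[f, y] = x`.  (The sums are finite: all terms with `k ≥ max p` vanish, so we sum over
`k < M` with `M = (sup p) + 1`.) -/
theorem adf_preimage_of_degree_neg_one
    {s : ℕ} (p r : Fin s → ℕ) (hp : StrictAnti p)
    (x : Matrix (PBox s p r) (PBox s p r) F)
    (hxdeg : ∀ b' b : PBox s p r, pdeg b' - pdeg b ≠ -1 → x b' b = 0)
    (i j : Fin s)
    (hsupp : ∀ b' b : PBox s p r, x b' b ≠ 0 → b'.1 = i ∧ b.1 = j)
    (hx0 : x ≠ 0) :
    (i < j →
      shiftL p r *
          (∑ k ∈ Finset.range (Finset.univ.sup p + 1),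
            shiftR p r ^ (k + 1) * x * shiftL p r ^ k) -
        (∑ k ∈ Finset.range (Finset.univ.sup p + 1),
            shiftR p r ^ (k + 1) * x * shiftL p r ^ k) * shiftL p r = x) ∧
    (j < i →
      shiftL p r *
          (-∑ k ∈ Finset.range (Finset.univ.sup p + 1),
            shiftL p r ^ k * x * shiftR p r ^ (k + 1)) -
        (-∑ k ∈ Finset.range (Finset.univ.sup p + 1),
            shiftL p r ^ k * x * shiftR p r ^ (k + 1)) * shiftL p r = x) := by
  have hMi : p i ≤ Finset.univ.sup p := Finset.le_sup (Finset.mem_univ i)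
  have hMj : p j ≤ Finset.univ.sup p := Finset.le_sup (Finset.mem_univ j)
  constructor
  · -- Part 1 : i < j
    intro hij
    have hpij : p j < p i := hp hij
    have hterm : ∀ (k : ℕ) (c' c : PBox s p r),
        (shiftR p r ^ (k+1) * x * shiftL p r ^ k :
          Matrix (PBox s p r) (PBox s p r) F) c' c =
        if h : (c'.2.2 : ℕ) + (k+1) < p c'.1 ∧ (c.2.2 : ℕ) + k < p c.1 then
          x ⟨c'.1, (c'.2.1, ⟨(c'.2.2 : ℕ) + (k+1), h.1⟩)⟩
            ⟨c.1, (c.2.1, ⟨(c.2.2 : ℕ) + k, h.2⟩)⟩ else 0 := by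
      intro k c' c
      rw [mul_shiftL_pow]
      by_cases h2 : (c.2.2 : ℕ) + k < p c.1
      · rw [dif_pos h2, pow_shiftR_mul]
        by_cases h1 : (c'.2.2 : ℕ) + (k+1) < p c'.1
        · rw [dif_pos h1, dif_pos ⟨h1, h2⟩]
        · rw [dif_neg h1, dif_neg (fun hh => h1 hh.1)]
      · rw [dif_neg h2, dif_neg (fun hh => h2 hh.2)]
    ext b' b
    obtain ⟨i₁, u, a, ha⟩ := b'
    obtain ⟨j₁, v, c, hc⟩ := b
    rw [Matrix.sub_apply, shiftL_mul, mul_shiftL]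
    dsimp only
    by_cases hfib : i₁ = i ∧ j₁ = j
    · obtain ⟨hi, hj⟩ := hfib
      subst hi; subst hj
      have eS : ∀ (a1 c1 : ℕ) (ha1 : a1 < p i₁) (hc1 : c1 < p j₁),
          ((∑ k ∈ Finset.range (Finset.univ.sup p + 1),
            shiftR p r ^ (k + 1) * x * shiftL p r ^ k :
              Matrix (PBox s p r) (PBox s p r) F)) ⟨i₁, (u, ⟨a1, ha1⟩)⟩ ⟨j₁, (v, ⟨c1, hc1⟩)⟩
          = ∑ k ∈ Finset.range (Finset.univ.sup p + 1),
              entE x i₁ j₁ u v (a1 + (k+1)) (c1 + k) := by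
        intro a1 c1 ha1 hc1
        rw [Matrix.sum_apply]
        refine Finset.sum_congr rfl fun k _ => ?_
        rw [hterm]
        rfl
      by_cases h1 : 1 ≤ a
      · rw [dif_pos h1, eS]
        by_cases h2 : c + 1 < p j₁
        · rw [dif_pos h2, eS]
          have r1 : ∑ k ∈ Finset.range (Finset.univ.sup p + 1),
                entE x i₁ j₁ u v (a - 1 + (k+1)) (c + k)
              = ∑ k ∈ Finset.range (Finset.univ.sup p + 1),
                entE x i₁ j₁ u v (a + k) (c + k) :=
            Finset.sum_congr rfl fun k _ => by
              rw [show a - 1 + (k+1) = a + k from by omega]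
          have r2 : ∑ k ∈ Finset.range (Finset.univ.sup p + 1),
                entE x i₁ j₁ u v (a + (k+1)) (c + 1 + k)
              = ∑ k ∈ Finset.range (Finset.univ.sup p + 1),
                entE x i₁ j₁ u v (a + (k+1)) (c + (k+1)) :=
            Finset.sum_congr rfl fun k _ => by
              rw [show c + 1 + k = c + (k+1) from by omega]
          rw [r1, r2, ← Finset.sum_sub_distrib,
            Finset.sum_range_sub' (f := fun k => entE x i₁ j₁ u v (a + k) (c + k))]
          rw [show entE x i₁ j₁ u v (a + (Finset.univ.sup p + 1))
                (c + (Finset.univ.sup p + 1)) = 0 from entE_of_ge (by omega), sub_zero]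
          rw [entE_eq x i₁ j₁ u v (a + 0) (c + 0) (by omega) (by omega)]
          rfl
        · rw [dif_neg h2, sub_zero]
          rw [Finset.sum_eq_single_of_mem 0 (Finset.mem_range.mpr (by omega))
            (fun k _ hk => entE_of_ge (by omega))]
          rw [show a - 1 + (0+1) = a from by omega, show c + 0 = c from rfl,
            entE_eq x i₁ j₁ u v a c ha hc]
      · rw [dif_neg h1]
        have hxz : x ⟨i₁, (u, ⟨a, ha⟩)⟩ ⟨j₁, (v, ⟨c, hc⟩)⟩ = 0 := by
          apply hxdeg
          simp only [pdeg]
          try dsimp only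
          omega
        rw [hxz]
        by_cases h2 : c + 1 < p j₁
        · rw [dif_pos h2, eS]
          rw [Finset.sum_eq_zero fun k _ => entE_deg hxdeg (by omega)]
          simp
        · rw [dif_neg h2]
          simp
    · have hxz : ∀ (b1 b2 : PBox s p r), b1.1 = i₁ → b2.1 = j₁ → x b1 b2 = 0 := by
        intro b1 b2 h1 h2
        by_contra hne
        obtain ⟨e1, e2⟩ := hsupp _ _ hne
        exact hfib ⟨by rw [← h1]; exact e1, by rw [← h2]; exact e2⟩
      have hSz : ∀ (a1 : Fin (p i₁)) (c1 : Fin (p j₁)),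
          ((∑ k ∈ Finset.range (Finset.univ.sup p + 1),
            shiftR p r ^ (k + 1) * x * shiftL p r ^ k :
              Matrix (PBox s p r) (PBox s p r) F)) ⟨i₁, (u, a1)⟩ ⟨j₁, (v, c1)⟩ = 0 := by
        intro a1 c1
        rw [Matrix.sum_apply]
        refine Finset.sum_eq_zero fun k _ => ?_
        rw [hterm]
        split_ifs with h
        · exact hxz _ _ rfl rfl
        · rfl
      have hxz0 : x ⟨i₁, (u, ⟨a, ha⟩)⟩ ⟨j₁, (v, ⟨c, hc⟩)⟩ = 0 := hxz _ _ rfl rfl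
      rw [hxz0]
      split_ifs <;> simp [hSz]
  · -- Part 2 : j < i
    intro hji
    have hpji : p i < p j := hp hji
    have hterm2 : ∀ (k : ℕ) (c' c : PBox s p r),
        (shiftL p r ^ k * x * shiftR p r ^ (k+1) :
          Matrix (PBox s p r) (PBox s p r) F) c' c =
        if h : k ≤ (c'.2.2 : ℕ) ∧ k + 1 ≤ (c.2.2 : ℕ) then
          x ⟨c'.1, (c'.2.1, ⟨(c'.2.2 : ℕ) - k, by have := c'.2.2.isLt; omega⟩)⟩
            ⟨c.1, (c.2.1, ⟨(c.2.2 : ℕ) - (k+1), by have := c.2.2.isLt; omega⟩)⟩ else 0 := by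
      intro k c' c
      rw [mul_pow_shiftR]
      by_cases h2 : k + 1 ≤ (c.2.2 : ℕ)
      · rw [dif_pos h2, pow_shiftL_mul]
        by_cases h1 : k ≤ (c'.2.2 : ℕ)
        · rw [dif_pos h1, dif_pos ⟨h1, h2⟩]
        · rw [dif_neg h1, dif_neg (fun hh => h1 hh.1)]
      · rw [dif_neg h2, dif_neg (fun hh => h2 hh.2)]
    set T : Matrix (PBox s p r) (PBox s p r) F :=
      ∑ k ∈ Finset.range (Finset.univ.sup p + 1),
        shiftL p r ^ k * x * shiftR p r ^ (k + 1) with hT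
    have hswap : shiftL p r * (-T) - (-T) * shiftL p r
        = T * shiftL p r - shiftL p r * T := by noncomm_ring
    rw [hswap]
    ext b' b
    obtain ⟨i₁, u, a, ha⟩ := b'
    obtain ⟨j₁, v, c, hc⟩ := b
    rw [Matrix.sub_apply, mul_shiftL, shiftL_mul]
    dsimp only
    by_cases hfib : i₁ = i ∧ j₁ = j
    · obtain ⟨hi, hj⟩ := hfib
      subst hi; subst hj
      have eS2 : ∀ (a1 c1 : ℕ) (ha1 : a1 < p i₁) (hc1 : c1 < p j₁),
          T ⟨i₁, (u, ⟨a1, ha1⟩)⟩ ⟨j₁, (v, ⟨c1, hc1⟩)⟩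
          = ∑ k ∈ Finset.range (Finset.univ.sup p + 1),
              if k ≤ a1 ∧ k + 1 ≤ c1 then entE x i₁ j₁ u v (a1 - k) (c1 - (k+1)) else 0 := by
        intro a1 c1 ha1 hc1
        rw [hT, Matrix.sum_apply]
        refine Finset.sum_congr rfl fun k _ => ?_
        rw [hterm2]
        dsimp only
        split_ifs with h
        · exact (entE_eq x i₁ j₁ u v _ _ (by omega) (by omega)).symm
        · rfl
      by_cases h2 : c + 1 < p j₁
      · rw [dif_pos h2, eS2]
        by_cases h1 : 1 ≤ a
        · rw [dif_pos h1, eS2]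
          have r1 : (∑ k ∈ Finset.range (Finset.univ.sup p + 1),
                if k ≤ a ∧ k + 1 ≤ c + 1 then entE x i₁ j₁ u v (a - k) (c + 1 - (k+1)) else 0)
              = ∑ k ∈ Finset.range (Finset.univ.sup p + 1),
                if k ≤ a ∧ k ≤ c then entE x i₁ j₁ u v (a - k) (c - k) else 0 := by
            refine Finset.sum_congr rfl fun k _ => ?_
            by_cases hk : k ≤ a ∧ k ≤ c
            · rw [if_pos ⟨hk.1, by omega⟩, if_pos hk,
                show c + 1 - (k+1) = c - k from by omega]
            · rw [if_neg (fun hh => hk ⟨hh.1, by omega⟩), if_neg hk]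
          have r2 : (∑ k ∈ Finset.range (Finset.univ.sup p + 1),
                if k ≤ a - 1 ∧ k + 1 ≤ c then entE x i₁ j₁ u v (a - 1 - k) (c - (k+1)) else 0)
              = ∑ k ∈ Finset.range (Finset.univ.sup p + 1),
                if k + 1 ≤ a ∧ k + 1 ≤ c then entE x i₁ j₁ u v (a - (k+1)) (c - (k+1)) else 0 := by
            refine Finset.sum_congr rfl fun k _ => ?_
            by_cases hk : k + 1 ≤ a ∧ k + 1 ≤ c
            · rw [if_pos (show k ≤ a - 1 ∧ k + 1 ≤ c from by omega), if_pos hk,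
                show a - 1 - k = a - (k+1) from by omega]
            · rw [if_neg (fun hh => hk (by omega)), if_neg hk]
          rw [r1, r2, ← Finset.sum_sub_distrib,
            Finset.sum_range_sub'
              (f := fun k => if k ≤ a ∧ k ≤ c then entE x i₁ j₁ u v (a - k) (c - k) else 0)]
          rw [if_pos ⟨Nat.zero_le _, Nat.zero_le _⟩, if_neg (by omega), sub_zero]
          rw [entE_eq x i₁ j₁ u v (a - 0) (c - 0) (by omega) (by omega)]
          rfl
        · rw [dif_neg h1, sub_zero]
          rw [Finset.sum_eq_single_of_mem 0 (Finset.mem_range.mpr (by omega))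
            (fun k _ hk => if_neg (fun hh => by omega))]
          rw [if_pos ⟨Nat.zero_le _, by omega⟩]
          rw [entE_eq x i₁ j₁ u v (a - 0) (c + 1 - (0+1)) (by omega) (by omega)]
          rfl
      · rw [dif_neg h2]
        have hxz : x ⟨i₁, (u, ⟨a, ha⟩)⟩ ⟨j₁, (v, ⟨c, hc⟩)⟩ = 0 := by
          apply hxdeg
          simp only [pdeg]
          try dsimp only
          omega
        rw [hxz]
        by_cases h1 : 1 ≤ a
        · rw [dif_pos h1, eS2]
          rw [Finset.sum_eq_zero fun k _ => ?_]
          · simp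
          · split_ifs with hcnd
            · exact entE_deg hxdeg (by omega)
            · rfl
        · rw [dif_neg h1]
          simp
    · have hxz : ∀ (b1 b2 : PBox s p r), b1.1 = i₁ → b2.1 = j₁ → x b1 b2 = 0 := by
        intro b1 b2 h1 h2
        by_contra hne
        obtain ⟨e1, e2⟩ := hsupp _ _ hne
        exact hfib ⟨by rw [← h1]; exact e1, by rw [← h2]; exact e2⟩
      have hSz : ∀ (a1 : Fin (p i₁)) (c1 : Fin (p j₁)),
          T ⟨i₁, (u, a1)⟩ ⟨j₁, (v, c1)⟩ = 0 := by
        intro a1 c1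
        rw [hT, Matrix.sum_apply]
        refine Finset.sum_eq_zero fun k _ => ?_
        rw [hterm2]
        split_ifs with h
        · exact hxz _ _ rfl rfl
        · rfl
      have hxz0 : x ⟨i₁, (u, ⟨a, ha⟩)⟩ ⟨j₁, (v, ⟨c, hc⟩)⟩ = 0 := hxz _ _ rfl rfl
      rw [hxz0]
      split_ifs <;> simp [hSz]
end

section
/- Let f ∈ gl_N be a nilpotent of depth d = 2D (D = p_1 − 1, pyramid setup), and let E = a(f^T)^{D-1} + b(f^T)^D ∈ g_{d-1}, where a ∈ Hom(V[D-1],V[D]) and b ∈ Hom(V[D],V[D-1]). Then the centralizer of E in g_1 is coisotropic with respect to the form ω(x,y) = tr(f[x,y]) if and only if ab = λ·1_{V[D]} for some scalar λ. -/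
/-!
The centralizer `C` of `E` in `g₁` is the kernel of `z ↦ [E, z]`, whose only coordinates on `g₁`
are the entries `[E, z] u w` with `u ∈ V[D]`, `w ∈ V[-D]`. The form `ω` is nondegenerate on `g₁`,
since `ad f : g₁ → g₋₁` is injective. Hence `C^⊥` is spanned by the `ω`-duals `X_{uw}` of these
coordinates, and `C` is coisotropic iff `[E, X_{uw}] = 0` for all `u, w`. The duals are explicit,
and `[E, X_{uw}] u' w' = [u = head w'] (a b) u' (head w) - [u' = head w] (a b) u (head w')`,
which vanishes for all `u, w, u', w'` exactly when `a b` is a scalar on `V[D]`.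
-/

open Matrix

variable {F : Type*} [Field F]

/-- The projection `1_{V[c]}` onto the `h`-eigenspace of `V` of eigenvalue `c`. -/
def projDeg {s : ℕ} (p r : Fin s → ℕ) (c : ℤ) :
    Matrix (PBox s p r) (PBox s p r) F :=
  fun b' b => if b' = b ∧ pdeg b = c then 1 else 0

namespace PBox

variable {s : ℕ} {p r : Fin s → ℕ}

abbrev withCol (c : PBox s p r) (n : ℕ) (h : n < p c.1) : PBox s p r := ⟨c.1, (c.2.1, ⟨n, h⟩)⟩

abbrev head (c : PBox s p r) : PBox s p r := c.withCol 0 (Nat.zero_lt_of_lt c.2.2.isLt)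

lemma ext_iff' {c d : PBox s p r} :
    c = d ↔ c.1 = d.1 ∧ (c.2.1 : ℕ) = d.2.1 ∧ (c.2.2 : ℕ) = d.2.2 := by
  obtain ⟨i, j, k⟩ := c
  obtain ⟨i', j', k'⟩ := d
  constructor
  · rintro h
    cases h
    simp
  · rintro ⟨h1, h2, h3⟩
    dsimp only at h1 h2 h3
    subst h1
    simpa [Fin.ext_iff] using ⟨h2, h3⟩

lemma head_eq_iff {c d : PBox s p r} :
    c.head = d ↔ c.1 = d.1 ∧ (c.2.1 : ℕ) = d.2.1 ∧ (d.2.2 : ℕ) = 0 := by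
  rw [ext_iff']
  exact and_congr_right fun _ => and_congr_right fun _ => eq_comm

lemma p_eq_of_head_eq {c d : PBox s p r} (h : c.head = d) : p c.1 = p d.1 :=
  congrArg p (head_eq_iff.1 h).1

lemma head_eq_head_iff {c d : PBox s p r} :
    c.head = d.head ↔ c.1 = d.1 ∧ (c.2.1 : ℕ) = d.2.1 := by
  rw [head_eq_iff]
  exact ⟨fun h => ⟨h.1, h.2.1⟩, fun h => ⟨h.1, h.2, rfl⟩⟩

lemma head_eq_self_iff {c : PBox s p r} : c.head = c ↔ (c.2.2 : ℕ) = 0 := by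
  rw [head_eq_iff]
  exact ⟨fun h => h.2.2, fun h => ⟨rfl, rfl, h⟩⟩

lemma head_eq_head_and_col_eq_iff {c d : PBox s p r} :
    c.head = d.head ∧ (c.2.2 : ℕ) = d.2.2 ↔ c = d := by
  rw [head_eq_head_iff, and_assoc, ← ext_iff']

lemma head_eq_and_col_eq_zero_iff {c u : PBox s p r} (hu : (u.2.2 : ℕ) = 0) :
    c.head = u ∧ (c.2.2 : ℕ) = 0 ↔ c = u := by
  constructor
  · rintro ⟨h, hc⟩
    rwa [head_eq_self_iff.2 hc] at h
  · rintro rfl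
    exact ⟨head_eq_self_iff.2 hu, hu⟩

def IsSucc (c c' : PBox s p r) : Prop :=
  c'.1 = c.1 ∧ (c'.2.1 : ℕ) = c.2.1 ∧ (c'.2.2 : ℕ) = c.2.2 + 1

lemma exists_isSucc {c : PBox s p r} (h : (c.2.2 : ℕ) + 1 < p c.1) : ∃ c', c.IsSucc c' :=
  ⟨c.withCol _ h, rfl, rfl, rfl⟩

lemma exists_isSucc_of_pos {c : PBox s p r} (h : 1 ≤ (c.2.2 : ℕ)) :
    ∃ c₀ : PBox s p r, c₀.IsSucc c :=
  ⟨c.withCol ((c.2.2 : ℕ) - 1) (by omega), rfl, rfl, by simp only; omega⟩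

namespace IsSucc

variable {c c' : PBox s p r}

lemma p_eq (h : c.IsSucc c') : p c'.1 = p c.1 := congrArg p h.1

lemma col_eq (h : c.IsSucc c') : (c'.2.2 : ℕ) = c.2.2 + 1 := h.2.2

lemma head_eq (h : c.IsSucc c') : c'.head = c.head := ext_iff'.2 ⟨h.1, h.2.1, rfl⟩

lemma inj {c₁ c₂ : PBox s p r} (h₁ : c₁.IsSucc c') (h₂ : c₂.IsSucc c') : c₁ = c₂ :=
  ext_iff'.2 ⟨h₁.1.symm.trans h₂.1, h₁.2.1.symm.trans h₂.2.1, by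
    have := h₁.col_eq; have := h₂.col_eq; omega⟩

lemma unique {c₁ c₂ : PBox s p r} (h₁ : c.IsSucc c₁) (h₂ : c.IsSucc c₂) : c₁ = c₂ :=
  ext_iff'.2 ⟨h₁.1.trans h₂.1.symm, h₁.2.1.trans h₂.2.1.symm, by
    have := h₁.col_eq; have := h₂.col_eq; omega⟩

end IsSucc

end PBox

section Entries

variable {s : ℕ} {p r : Fin s → ℕ}

lemma sum_ite_eq_withCol {M : Type*} [AddCommMonoid M] {P : PBox s p r → Prop} [DecidablePred P]
    (c : PBox s p r) (n : ℕ) (hP : ∀ e, P e ↔ e.1 = c.1 ∧ (e.2.1 : ℕ) = c.2.1 ∧ (e.2.2 : ℕ) = n)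
    (g : PBox s p r → M) :
    (∑ e, if P e then g e else 0) = if h : n < p c.1 then g (c.withCol n h) else 0 := by
  split_ifs with h
  · rw [Fintype.sum_eq_single (c.withCol n h) fun e he => if_neg fun hPe => he ?_,
      if_pos ((hP (c.withCol n h)).2 ⟨rfl, rfl, rfl⟩)]
    simpa [PBox.ext_iff'] using (hP e).1 hPe
  · refine Finset.sum_eq_zero fun e _ => if_neg fun hPe => h ?_
    obtain ⟨h1, -, h3⟩ := (hP e).1 hPe
    exact h1 ▸ h3 ▸ e.2.2.isLt

lemma shiftL_apply_of_isSucc {d e : PBox s p r} (h : e.IsSucc d) :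
    (shiftL p r : Matrix (PBox s p r) (PBox s p r) F) d e = 1 :=
  if_pos h

lemma shiftL_apply_of_not_isSucc {d e : PBox s p r} (h : ¬ e.IsSucc d) :
    (shiftL p r : Matrix (PBox s p r) (PBox s p r) F) d e = 0 :=
  if_neg h

lemma shiftL_mul_apply_of_isSucc {d₀ d : PBox s p r} (h : d₀.IsSucc d)
    (M : Matrix (PBox s p r) (PBox s p r) F) (c : PBox s p r) :
    (shiftL p r * M : Matrix (PBox s p r) (PBox s p r) F) d c = M d₀ c := by
  rw [mul_apply, Fintype.sum_eq_single d₀ fun e he => by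
    rw [shiftL_apply_of_not_isSucc fun he' => he (he'.inj h), zero_mul],
    shiftL_apply_of_isSucc h, one_mul]

lemma shiftL_mul_apply_of_col_eq_zero {d : PBox s p r} (h : (d.2.2 : ℕ) = 0)
    (M : Matrix (PBox s p r) (PBox s p r) F) (c : PBox s p r) :
    (shiftL p r * M : Matrix (PBox s p r) (PBox s p r) F) d c = 0 :=
  Finset.sum_eq_zero fun e _ =>
    mul_eq_zero_of_left (shiftL_apply_of_not_isSucc fun he => by have := he.col_eq; omega) _

lemma mul_shiftL_apply_of_isSucc {c c' : PBox s p r} (h : c.IsSucc c')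
    (M : Matrix (PBox s p r) (PBox s p r) F) (d : PBox s p r) :
    (M * shiftL p r : Matrix (PBox s p r) (PBox s p r) F) d c = M d c' := by
  rw [mul_apply, Fintype.sum_eq_single c' fun e he => by
    rw [shiftL_apply_of_not_isSucc fun he' => he (he'.unique h), mul_zero],
    shiftL_apply_of_isSucc h, mul_one]

lemma mul_shiftL_apply_of_last {c : PBox s p r} (h : (c.2.2 : ℕ) + 1 = p c.1)
    (M : Matrix (PBox s p r) (PBox s p r) F) (d : PBox s p r) :
    (M * shiftL p r : Matrix (PBox s p r) (PBox s p r) F) d c = 0 :=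
  Finset.sum_eq_zero fun e _ => mul_eq_zero_of_right _ (shiftL_apply_of_not_isSucc fun he => by
    have := he.p_eq
    have := he.col_eq
    have := e.2.2.isLt
    omega)

lemma mul_shiftR_apply (M : Matrix (PBox s p r) (PBox s p r) F) (c d : PBox s p r) :
    (M * shiftR p r : Matrix (PBox s p r) (PBox s p r) F) c d =
      if h : 1 ≤ (d.2.2 : ℕ) then M c (d.withCol ((d.2.2 : ℕ) - 1) (by omega)) else 0 := by
  simp only [mul_apply, shiftR, mul_ite, mul_one, mul_zero]
  split_ifs with h
  · rw [sum_ite_eq_withCol d ((d.2.2 : ℕ) - 1) (fun e => by omega), dif_pos (by omega)]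
  · exact Finset.sum_eq_zero fun e _ => if_neg (by omega)

lemma mul_shiftR_pow_apply (M : Matrix (PBox s p r) (PBox s p r) F) (m : ℕ) (c d : PBox s p r) :
    (M * shiftR p r ^ m : Matrix (PBox s p r) (PBox s p r) F) c d =
      if h : m ≤ (d.2.2 : ℕ) then M c (d.withCol ((d.2.2 : ℕ) - m) (by omega)) else 0 := by
  induction m generalizing d with
  | zero => simp [show d.withCol (d.2.2 : ℕ) d.2.2.isLt = d from PBox.ext_iff'.2 (by simp)]
  | succ m ih =>
    rw [pow_succ, ← Matrix.mul_assoc, mul_shiftR_apply]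
    split_ifs with h1 h2 h2
    · rw [ih, dif_pos (by simp only; omega)]
      exact congrArg _ (PBox.ext_iff'.2 ⟨rfl, rfl, by change _ - 1 - m = _ - (m + 1); omega⟩)
    · rw [ih, dif_neg (by simp only; omega)]
    · omega
    · rfl

lemma apply_withCol_eq_apply_head {α : Type*} (M : Matrix (PBox s p r) (PBox s p r) α)
    (u c : PBox s p r) {n : ℕ} (h : n < p c.1) (hn : n = 0) :
    M u (c.withCol n h) = M u c.head := by
  subst hn
  rfl

lemma sum_ite_col_eq_apply_head {M : Type*} [AddCommMonoid M] {m : ℕ} (g : PBox s p r → M)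
    (hg : ∀ e, g e ≠ 0 → (e.2.2 : ℕ) = 0 ∧ m < p e.1) :
    ∑ c : PBox s p r, (if (c.2.2 : ℕ) = m then g c.head else 0) = ∑ e, g e := by
  refine Finset.sum_bij_ne_zero (fun c _ _ => c.head) (fun _ _ _ => Finset.mem_univ _)
    (fun c₁ _ h₁ c₂ _ h₂ h => ?_) (fun e _ he => ?_) (fun c _ h => ?_)
  · rw [ne_eq, ite_eq_right_iff, Classical.not_imp] at h₁ h₂
    exact PBox.head_eq_head_and_col_eq_iff.1 ⟨h, h₁.1.trans h₂.1.symm⟩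
  · obtain ⟨he0, hm⟩ := hg e he
    refine ⟨e.withCol m hm, Finset.mem_univ _, ?_, PBox.ext_iff'.2 ⟨rfl, rfl, he0.symm⟩⟩
    rw [if_pos rfl]
    exact (PBox.head_eq_self_iff.2 he0).symm ▸ he
  · rw [ne_eq, ite_eq_right_iff, Classical.not_imp] at h
    exact if_pos h.1

end Entries

lemma trace_mul_eq_sum {n α : Type*} [Fintype n] [NonUnitalNonAssocSemiring α]
    (M z : Matrix n n α) : trace (M * z) = ∑ d, ∑ c, M d c * z c d := rfl

lemma trace_mul_lie {n α : Type*} [Fintype n] [CommRing α] (A x z : Matrix n n α) :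
    trace (A * (x * z - z * x)) = trace ((A * x - x * A) * z) := by
  rw [mul_sub, sub_mul, trace_sub, trace_sub, ← Matrix.mul_assoc, ← Matrix.mul_assoc,
    trace_mul_cycle A z x]

section Grading

variable {s : ℕ} (p r : Fin s → ℕ)

-- The graded piece `g_k` of `gl_N` for the grading by `ad h`.
def degreePart (k : ℤ) : Submodule F (Matrix (PBox s p r) (PBox s p r) F) where
  carrier := {x | ∀ u w, pdeg u - pdeg w ≠ k → x u w = 0}
  add_mem' hx hy u w h := by simp [hx u w h, hy u w h]
  zero_mem' _ _ _ := rfl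
  smul_mem' c x hx u w h := by simp [hx u w h]

def kirillovForm : LinearMap.BilinForm F (Matrix (PBox s p r) (PBox s p r) F) :=
  LinearMap.mk₂ F (fun x z => trace (shiftL p r * (x * z - z * x)))
    (fun _ _ _ => by simp only [add_mul, mul_add, mul_sub, trace_add, trace_sub]; ring)
    (fun _ _ _ => by simp only [smul_mul_assoc, mul_smul_comm, ← smul_sub, trace_smul])
    (fun _ _ _ => by simp only [add_mul, mul_add, mul_sub, trace_add, trace_sub]; ring)
    (fun _ _ _ => by simp only [smul_mul_assoc, mul_smul_comm, ← smul_sub, trace_smul])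

variable {p r}

lemma kirillovForm_apply (x z : Matrix (PBox s p r) (PBox s p r) F) :
    kirillovForm p r x z = trace (shiftL p r * (x * z - z * x)) := rfl

lemma mem_degreePart_of_pdeg_eq {x : Matrix (PBox s p r) (PBox s p r) F} {k l : ℤ}
    (hx : ∀ u w, x u w ≠ 0 → pdeg u = k ∧ pdeg w = l) : x ∈ degreePart p r (k - l) :=
  fun u w h => by
    by_contra hne
    obtain ⟨hu, hw⟩ := hx u w hne
    exact h (by rw [hu, hw])

lemma one_mem_degreePart : (1 : Matrix (PBox s p r) (PBox s p r) F) ∈ degreePart p r 0 :=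
  fun _ _ h => one_apply_ne fun huw => h (by rw [huw, sub_self])

lemma mul_mem_degreePart {k l : ℤ} {x y : Matrix (PBox s p r) (PBox s p r) F}
    (hx : x ∈ degreePart p r k) (hy : y ∈ degreePart p r l) : x * y ∈ degreePart p r (k + l) := by
  intro u w h
  refine Finset.sum_eq_zero fun e _ => ?_
  by_cases he : pdeg u - pdeg e = k
  · simp only [hy e w (by omega), mul_zero]
  · simp only [hx u e he, zero_mul]

lemma lie_mem_degreePart {k l : ℤ} {x y : Matrix (PBox s p r) (PBox s p r) F}
    (hx : x ∈ degreePart p r k) (hy : y ∈ degreePart p r l) :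
    x * y - y * x ∈ degreePart p r (k + l) :=
  sub_mem (mul_mem_degreePart hx hy) (add_comm l k ▸ mul_mem_degreePart hy hx)

lemma shiftL_mem_degreePart :
    (shiftL p r : Matrix (PBox s p r) (PBox s p r) F) ∈ degreePart p r (-2) :=
  fun _ _ h => if_neg fun ⟨h1, _, h3⟩ => h (by simp only [pdeg, h1]; omega)

lemma shiftR_pow_mem_degreePart (m : ℕ) :
    (shiftR p r ^ m : Matrix (PBox s p r) (PBox s p r) F) ∈ degreePart p r (2 * m) := by
  have hR : (shiftR p r : Matrix (PBox s p r) (PBox s p r) F) ∈ degreePart p r 2 :=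
    fun _ _ h => if_neg fun ⟨h1, _, h3⟩ => h (by simp only [pdeg, h1]; omega)
  induction m with
  | zero => simpa using one_mem_degreePart
  | succ m ih =>
    rw [pow_succ]
    convert mul_mem_degreePart ih hR using 2
    push_cast
    ring

section Injectivity

variable {x : Matrix (PBox s p r) (PBox s p r) F} (hx : x ∈ degreePart p r 1)
  (hf : shiftL p r * x = x * shiftL p r)

include hx in
lemma length_sub_two_mul_col_eq {d c : PBox s p r} (h : x d c ≠ 0) :
    (p d.1 : ℤ) - 2 * (d.2.2 : ℕ) = p c.1 - 2 * (c.2.2 : ℕ) + 1 := by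
  have := not_imp_comm.1 (hx d c) h
  simp only [pdeg] at this
  omega

-- `[f, x] = 0` makes `x` constant along diagonals; follow one until the shorter string ends.
include hx hf in
lemma apply_eq_zero_of_commute_shiftL_of_lt {d c : PBox s p r} (hlt : p c.1 < p d.1) :
    x d c = 0 := by
  induction hn : p c.1 - (c.2.2 : ℕ) using Nat.strong_induction_on generalizing d c with
  | _ n ih =>
    by_contra hne
    have := length_sub_two_mul_col_eq hx hne
    obtain ⟨d', hd'⟩ := PBox.exists_isSucc (c := d) (by omega)
    have hstep := congrFun (congrFun hf d') c
    rw [shiftL_mul_apply_of_isSucc hd'] at hstep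
    by_cases hc : (c.2.2 : ℕ) + 1 = p c.1
    · exact hne (hstep.trans (mul_shiftL_apply_of_last hc _ _))
    · obtain ⟨c', hc'⟩ := PBox.exists_isSucc (c := c) (by have := c.2.2.isLt; omega)
      rw [mul_shiftL_apply_of_isSucc hc'] at hstep
      have := hc'.p_eq
      have := hd'.p_eq
      have := hc'.col_eq
      exact hne (hstep.trans (ih _ (by omega) (by omega) rfl))

include hx hf in
lemma apply_eq_zero_of_commute_shiftL_of_gt {d c : PBox s p r} (hlt : p d.1 < p c.1) :
    x d c = 0 := by
  induction hn : (d.2.2 : ℕ) using Nat.strong_induction_on generalizing d c with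
  | _ n ih =>
    by_contra hne
    have := length_sub_two_mul_col_eq hx hne
    obtain ⟨c₀, hc₀⟩ := PBox.exists_isSucc_of_pos (c := c) (by omega)
    have hstep := congrFun (congrFun hf d) c₀
    rw [mul_shiftL_apply_of_isSucc hc₀] at hstep
    by_cases hd : (d.2.2 : ℕ) = 0
    · exact hne (hstep.symm.trans (shiftL_mul_apply_of_col_eq_zero hd _ _))
    · obtain ⟨d₀, hd₀⟩ := PBox.exists_isSucc_of_pos (c := d) (by omega)
      rw [shiftL_mul_apply_of_isSucc hd₀] at hstep
      have := hc₀.p_eq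
      have := hd₀.p_eq
      have := hd₀.col_eq
      exact hne (hstep.symm.trans (ih _ (by omega) (by omega) rfl))

include hx hf in
lemma eq_zero_of_commute_shiftL : x = 0 := by
  ext d c
  rcases lt_trichotomy (p c.1) (p d.1) with h | h | h
  · exact apply_eq_zero_of_commute_shiftL_of_lt hx hf h
  · by_contra hne
    have := length_sub_two_mul_col_eq hx hne
    omega
  · exact apply_eq_zero_of_commute_shiftL_of_gt hx hf h

end Injectivity

lemma eq_zero_of_forall_kirillovForm_eq_zero {x : Matrix (PBox s p r) (PBox s p r) F}
    (hx : x ∈ degreePart p r 1) (h : ∀ z ∈ degreePart p r 1, kirillovForm p r x z = 0) :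
    x = 0 := by
  refine eq_zero_of_commute_shiftL hx (sub_eq_zero.1 ?_)
  ext d c
  by_cases hdc : pdeg c - pdeg d = 1
  · have hz : single c d (1 : F) ∈ degreePart p r 1 := fun u w huw =>
      single_apply_of_ne _ _ _ _ _ fun ⟨hu, hw⟩ => huw (hu ▸ hw ▸ hdc)
    simpa [kirillovForm_apply, trace_mul_lie, trace_mul_single] using h _ hz
  · exact lie_mem_degreePart shiftL_mem_degreePart hx d c (by omega)

def lieCoord (E : Matrix (PBox s p r) (PBox s p r) F) :
    Matrix (PBox s p r) (PBox s p r) F →ₗ[F] PBox s p r × PBox s p r → F where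
  toFun z i := (E * z - z * E) i.1 i.2
  map_add' z z' := by
    ext i
    simp only [mul_add, add_mul, Matrix.sub_apply, Matrix.add_apply, Pi.add_apply]
    ring
  map_smul' c z := by
    ext i
    simp only [mul_smul_comm, smul_mul_assoc, Matrix.sub_apply, Matrix.smul_apply, smul_eq_mul,
      Pi.smul_apply, RingHom.id_apply]
    ring

lemma lieCoord_eq_zero_iff {E z : Matrix (PBox s p r) (PBox s p r) F} :
    lieCoord E z = 0 ↔ E * z = z * E := by
  refine ⟨fun h => sub_eq_zero.1 (Matrix.ext fun u w => congrFun h (u, w)), fun h => ?_⟩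
  ext i
  simp [lieCoord, h]

end Grading

lemma LinearMap.SeparatingLeft.orthogonal_ker_le_ker_iff {K W ι : Type*} [Field K]
    [AddCommGroup W] [Module K W] [Fintype ι] {ω : W →ₗ[K] W →ₗ[K] K} (hω : ω.SeparatingLeft)
    (Φ : W →ₗ[K] ι → K) (X : ι → W) (hX : ∀ i z, ω (X i) z = Φ z i) :
    (∀ x, (∀ z, Φ z = 0 → ω x z = 0) → Φ x = 0) ↔ ∀ i, Φ (X i) = 0 := by
  classical
  refine ⟨fun h i => h _ fun z hz => by rw [hX, hz, Pi.zero_apply], fun h x hx => ?_⟩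
  have hmem : ω x ∈ (LinearMap.ker Φ).dualAnnihilator :=
    (Submodule.mem_dualAnnihilator _).2 fun z hz => hx z hz
  rw [← LinearMap.range_dualMap_eq_dualAnnihilator_ker] at hmem
  obtain ⟨μ, hμ⟩ := hmem
  -- `ω x` factors through `Φ`, so it is a combination of the `ω (X i)`.
  have hx' : x = ∑ i, μ (Pi.single i 1) • X i := by
    refine sub_eq_zero.1 (hω _ fun z => ?_)
    have hz : Φ z = ∑ i, Φ z i • Pi.single i 1 := by
      ext j
      simp [Pi.single_apply]
    rw [map_sub, LinearMap.sub_apply, ← hμ, LinearMap.dualMap_apply, hz, map_sum]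
    simp [hX, mul_comm]
  rw [hx', map_sum]
  simp [h]

section Centralizer

variable {s : ℕ} {p r : Fin s → ℕ} {q : ℕ}

lemma pdeg_mem_Icc (hmax : ∀ i, p i ≤ q) (c : PBox s p r) :
    pdeg c ∈ Set.Icc (1 - (q : ℤ)) (q - 1) := by
  have := hmax c.1
  have := c.2.2.isLt
  simp only [pdeg, Set.mem_Icc]
  omega

lemma pdeg_eq_sub_one_iff (hmax : ∀ i, p i ≤ q) {c : PBox s p r} :
    pdeg c = q - 1 ↔ p c.1 = q ∧ (c.2.2 : ℕ) = 0 := by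
  have := hmax c.1
  simp only [pdeg]
  omega

lemma pdeg_eq_sub_one_sub_one_iff (hmax : ∀ i, p i ≤ q) {c : PBox s p r} :
    pdeg c = (q : ℤ) - 1 - 1 ↔ p c.1 + 1 = q ∧ (c.2.2 : ℕ) = 0 := by
  have := hmax c.1
  simp only [pdeg]
  omega

lemma pdeg_eq_one_sub_iff (hmax : ∀ i, p i ≤ q) {c : PBox s p r} :
    pdeg c = 1 - q ↔ p c.1 = q ∧ (c.2.2 : ℕ) + 1 = q := by
  have := hmax c.1
  have := c.2.2.isLt
  simp only [pdeg]
  omega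

lemma apply_eq_zero_of_mem_degreePart_top (hmax : ∀ i, p i ≤ q)
    {x : Matrix (PBox s p r) (PBox s p r) F} (hx : x ∈ degreePart p r (2 * q - 2))
    {u w : PBox s p r} (h : ¬ (pdeg u = q - 1 ∧ pdeg w = 1 - q)) : x u w = 0 := by
  refine hx u w fun huw => h ?_
  obtain ⟨hu, hu'⟩ := pdeg_mem_Icc hmax u
  obtain ⟨hw, hw'⟩ := pdeg_mem_Icc hmax w
  omega

-- The element `E` of the statement, with `q = p₁ = D + 1`.
variable (q) in
def elementE (a b : Matrix (PBox s p r) (PBox s p r) F) : Matrix (PBox s p r) (PBox s p r) F :=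
  a * shiftR p r ^ (q - 2) + b * shiftR p r ^ (q - 1)

variable {a b : Matrix (PBox s p r) (PBox s p r) F}
  (ha : ∀ u w : PBox s p r, a u w ≠ 0 → pdeg u = (q : ℤ) - 1 ∧ pdeg w = (q : ℤ) - 1 - 1)
  (hb : ∀ u w : PBox s p r, b u w ≠ 0 → pdeg u = (q : ℤ) - 1 - 1 ∧ pdeg w = (q : ℤ) - 1)

include ha in
lemma strings_of_a_ne_zero (hmax : ∀ i, p i ≤ q) {u e : PBox s p r} (h : a u e ≠ 0) :
    (p u.1 = q ∧ (u.2.2 : ℕ) = 0) ∧ p e.1 + 1 = q ∧ (e.2.2 : ℕ) = 0 :=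
  ⟨(pdeg_eq_sub_one_iff hmax).1 (ha u e h).1, (pdeg_eq_sub_one_sub_one_iff hmax).1 (ha u e h).2⟩

include hb in
lemma strings_of_b_ne_zero (hmax : ∀ i, p i ≤ q) {e w : PBox s p r} (h : b e w ≠ 0) :
    (p e.1 + 1 = q ∧ (e.2.2 : ℕ) = 0) ∧ p w.1 = q ∧ (w.2.2 : ℕ) = 0 :=
  ⟨(pdeg_eq_sub_one_sub_one_iff hmax).1 (hb e w h).1, (pdeg_eq_sub_one_iff hmax).1 (hb e w h).2⟩

include ha hb in
lemma lie_elementE_mem_degreePart (hq : 2 ≤ q) {x : Matrix (PBox s p r) (PBox s p r) F}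
    (hx : x ∈ degreePart p r 1) :
    elementE q a b * x - x * elementE q a b ∈ degreePart p r (2 * q - 2) := by
  have hE : elementE q a b ∈ degreePart p r (2 * q - 3) := by
    refine add_mem ?_ ?_
    · convert mul_mem_degreePart (mem_degreePart_of_pdeg_eq ha) (shiftR_pow_mem_degreePart _)
        using 2
      push_cast [hq]
      ring
    · convert mul_mem_degreePart (mem_degreePart_of_pdeg_eq hb) (shiftR_pow_mem_degreePart _)
        using 2
      push_cast [show 1 ≤ q by omega]
      ring
  convert lie_mem_degreePart hE hx using 2
  ring

include ha hb in
lemma elementE_apply_of_pdeg_eq_sub_one (hmax : ∀ i, p i ≤ q) {u : PBox s p r}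
    (hu : pdeg u = q - 1) (c : PBox s p r) :
    elementE q a b u c = if (c.2.2 : ℕ) + 2 = q then a u c.head else 0 := by
  have hbu : (b * shiftR p r ^ (q - 1) : Matrix (PBox s p r) (PBox s p r) F) u c = 0 := by
    rw [mul_shiftR_pow_apply]
    split_ifs
    · by_contra h
      have := (hb _ _ h).1
      omega
    · rfl
  rw [elementE, Matrix.add_apply, hbu, add_zero, mul_shiftR_pow_apply]
  by_cases hc : (c.2.2 : ℕ) + 2 = q
  · rw [dif_pos (by omega), if_pos hc, apply_withCol_eq_apply_head a u c _ (by omega)]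
  · rw [if_neg hc]
    split_ifs
    · by_contra h
      have : p c.1 + 1 = q ∧ (c.2.2 : ℕ) - (q - 2) = 0 := (strings_of_a_ne_zero ha hmax h).2
      have := c.2.2.isLt
      omega
    · rfl

include ha in
lemma elementE_apply_of_pdeg_eq_one_sub (hmax : ∀ i, p i ≤ q) (hq : 2 ≤ q) {w : PBox s p r}
    (hw : pdeg w = 1 - q) (c : PBox s p r) : elementE q a b c w = b c w.head := by
  obtain ⟨hpw, hw⟩ := (pdeg_eq_one_sub_iff hmax).1 hw
  rw [elementE, Matrix.add_apply, mul_shiftR_pow_apply, mul_shiftR_pow_apply, dif_pos (by omega),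
    dif_pos (by omega), apply_withCol_eq_apply_head b c w _ (by omega), add_eq_right]
  by_contra h
  have : (w.2.2 : ℕ) - (q - 2) = 0 := (strings_of_a_ne_zero ha hmax h).2.2
  omega

include ha hb in
lemma lie_elementE_apply (hmax : ∀ i, p i ≤ q) (hq : 2 ≤ q) {u w : PBox s p r}
    (hu : pdeg u = q - 1) (hw : pdeg w = 1 - q) (z : Matrix (PBox s p r) (PBox s p r) F) :
    (elementE q a b * z - z * elementE q a b) u w =
      (∑ c, if (c.2.2 : ℕ) + 2 = q then a u c.head * z c w else 0) - ∑ c, z u c * b c w.head := by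
  simp only [Matrix.sub_apply, mul_apply, elementE_apply_of_pdeg_eq_sub_one ha hb hmax hu,
    elementE_apply_of_pdeg_eq_one_sub ha hmax hq hw, ite_mul, zero_mul]

-- `∑ₖ fᵏ (e a + b e fᵀ) (fᵀ)ᵏ`, where `e` is the matrix unit sending `u` to the head of the
-- string of `w`: the `ω`-dual of the coordinate `z ↦ [E, z] u w` on `g₁`.
variable (a b) in
def kirillovDual (u w : PBox s p r) : Matrix (PBox s p r) (PBox s p r) F := fun u' w' =>
  (if w'.head = u ∧ (u'.2.2 : ℕ) + 1 = w'.2.2 then b u'.head w.head else 0) +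
    (if u'.head = w.head ∧ (u'.2.2 : ℕ) = w'.2.2 then a u w'.head else 0)

lemma kirillovDual_apply (u w u' w' : PBox s p r) :
    kirillovDual a b u w u' w' =
      (if w'.head = u ∧ (u'.2.2 : ℕ) + 1 = w'.2.2 then b u'.head w.head else 0) +
        (if u'.head = w.head ∧ (u'.2.2 : ℕ) = w'.2.2 then a u w'.head else 0) := rfl

include ha hb in
lemma kirillovDual_mem_degreePart (hmax : ∀ i, p i ≤ q) {u w : PBox s p r}
    (hu : pdeg u = q - 1) (hw : pdeg w = 1 - q) : kirillovDual a b u w ∈ degreePart p r 1 := by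
  obtain ⟨hpu, -⟩ := (pdeg_eq_sub_one_iff hmax).1 hu
  obtain ⟨hpw, -⟩ := (pdeg_eq_one_sub_iff hmax).1 hw
  intro u' w' hne
  simp only [pdeg] at hne
  rw [kirillovDual_apply]
  have hb0 : (w'.head = u ∧ (u'.2.2 : ℕ) + 1 = w'.2.2) → b u'.head w.head = 0 := by
    rintro ⟨h1, h2⟩
    by_contra h
    have : p u'.1 + 1 = q := (strings_of_b_ne_zero hb hmax h).1.1
    have := PBox.p_eq_of_head_eq h1
    omega
  have ha0 : (u'.head = w.head ∧ (u'.2.2 : ℕ) = w'.2.2) → a u w'.head = 0 := by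
    rintro ⟨h1, h2⟩
    by_contra h
    have : p w'.1 + 1 = q := (strings_of_a_ne_zero ha hmax h).2.1
    have : p u'.1 = p w.1 := congrArg p (PBox.head_eq_head_iff.1 h1).1
    omega
  rw [ite_eq_right_iff.2 hb0, ite_eq_right_iff.2 ha0, add_zero]

include hb in
lemma shiftL_lie_kirillovDual_apply_of_col_eq_zero (hmax : ∀ i, p i ≤ q) {u : PBox s p r}
    (hu : pdeg u = q - 1) (w : PBox s p r) {d : PBox s p r} (hd : (d.2.2 : ℕ) = 0)
    (c : PBox s p r) :
    (shiftL p r * kirillovDual a b u w - kirillovDual a b u w * shiftL p r :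
      Matrix (PBox s p r) (PBox s p r) F) d c =
      -if c = u then b d.head w.head else 0 := by
  obtain ⟨hpu, hu0⟩ := (pdeg_eq_sub_one_iff hmax).1 hu
  rw [Matrix.sub_apply, shiftL_mul_apply_of_col_eq_zero hd, zero_sub]
  by_cases hc : (c.2.2 : ℕ) + 1 = p c.1
  · rw [mul_shiftL_apply_of_last hc, neg_zero, eq_comm, neg_eq_zero]
    refine ite_eq_right_iff.2 fun hcu => ?_
    subst hcu
    by_contra h
    have : p d.1 + 1 = q := (strings_of_b_ne_zero hb hmax h).1.1
    omega
  · obtain ⟨c', hc'⟩ := PBox.exists_isSucc (c := c) (by have := c.2.2.isLt; omega)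
    have := hc'.col_eq
    rw [mul_shiftL_apply_of_isSucc hc', kirillovDual_apply, hc'.head_eq,
      if_neg (fun h : _ ∧ (d.2.2 : ℕ) = c'.2.2 => by omega), add_zero]
    refine congrArg _ (if_congr ?_ rfl rfl)
    rw [← PBox.head_eq_and_col_eq_zero_iff (c := c) hu0]
    exact and_congr_right fun _ => by omega

include hb in
lemma shiftL_lie_kirillovDual_apply_of_isSucc (hmax : ∀ i, p i ≤ q) {u : PBox s p r}
    (hu : pdeg u = q - 1) (w : PBox s p r) {d₀ d : PBox s p r} (hd₀ : d₀.IsSucc d)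
    (c : PBox s p r) :
    (shiftL p r * kirillovDual a b u w - kirillovDual a b u w * shiftL p r :
      Matrix (PBox s p r) (PBox s p r) F) d c =
      if d.head = w.head ∧ (d.2.2 : ℕ) = c.2.2 + 1 ∧ (c.2.2 : ℕ) + 1 = p c.1 then a u c.head
        else 0 := by
  have hpu := ((pdeg_eq_sub_one_iff hmax).1 hu).1
  have := hd₀.col_eq
  rw [Matrix.sub_apply, shiftL_mul_apply_of_isSucc hd₀, kirillovDual_apply, ← hd₀.head_eq]
  by_cases hc : (c.2.2 : ℕ) + 1 = p c.1
  · rw [mul_shiftL_apply_of_last hc, sub_zero, ite_eq_right_iff.2, zero_add]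
    · exact if_congr (and_congr_right fun _ => by omega) rfl rfl
    · rintro ⟨hcu, _⟩
      by_contra h
      have : p d.1 + 1 = q := (strings_of_b_ne_zero hb hmax h).1.1
      have := PBox.p_eq_of_head_eq hcu
      omega
  · obtain ⟨c', hc'⟩ := PBox.exists_isSucc (c := c) (by have := c.2.2.isLt; omega)
    have := hc'.col_eq
    rw [mul_shiftL_apply_of_isSucc hc', kirillovDual_apply, hc'.head_eq,
      if_neg (fun h : _ ∧ _ ∧ _ => hc h.2.2), sub_eq_zero]
    congr 1 <;> exact if_congr (and_congr_right fun _ => by omega) rfl rfl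

include hb in
lemma shiftL_lie_kirillovDual_apply (hmax : ∀ i, p i ≤ q) {u : PBox s p r} (hu : pdeg u = q - 1)
    (w d c : PBox s p r) :
    (shiftL p r * kirillovDual a b u w - kirillovDual a b u w * shiftL p r :
      Matrix (PBox s p r) (PBox s p r) F) d c =
      (if d.head = w.head ∧ (d.2.2 : ℕ) = c.2.2 + 1 ∧ (c.2.2 : ℕ) + 1 = p c.1 then a u c.head
        else 0) - if c = u ∧ (d.2.2 : ℕ) = 0 then b d.head w.head else 0 := by
  rcases Nat.eq_zero_or_pos (d.2.2 : ℕ) with hd | hd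
  · rw [shiftL_lie_kirillovDual_apply_of_col_eq_zero hb hmax hu w hd,
      if_neg (fun h : _ ∧ _ ∧ _ => by omega), zero_sub]
    simp only [hd, and_true]
  · obtain ⟨d₀, hd₀⟩ := PBox.exists_isSucc_of_pos (c := d) hd
    rw [shiftL_lie_kirillovDual_apply_of_isSucc hb hmax hu w hd₀,
      if_neg (fun h : _ ∧ (d.2.2 : ℕ) = 0 => by omega), sub_zero]

include ha hb in
lemma kirillovForm_kirillovDual (hmax : ∀ i, p i ≤ q) (hq : 2 ≤ q) {u w : PBox s p r}
    (hu : pdeg u = q - 1) (hw : pdeg w = 1 - q) (z : Matrix (PBox s p r) (PBox s p r) F) :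
    kirillovForm p r (kirillovDual a b u w) z = (elementE q a b * z - z * elementE q a b) u w := by
  obtain ⟨hpw, hw1⟩ := (pdeg_eq_one_sub_iff hmax).1 hw
  rw [kirillovForm_apply, trace_mul_lie, trace_mul_eq_sum, lie_elementE_apply ha hb hmax hq hu hw]
  simp only [shiftL_lie_kirillovDual_apply hb hmax hu, sub_mul, Finset.sum_sub_distrib]
  congr 1
  · rw [Finset.sum_comm]
    refine Finset.sum_congr rfl fun c _ => ?_
    by_cases hac : a u c.head = 0
    · simp [hac]
    have hpc : p c.1 + 1 = q := (strings_of_a_ne_zero ha hmax hac).2.1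
    by_cases hc : (c.2.2 : ℕ) + 2 = q
    · have hdw (d : PBox s p r) :
          (d.head = w.head ∧ (d.2.2 : ℕ) = c.2.2 + 1 ∧ (c.2.2 : ℕ) + 1 = p c.1) ↔ d = w := by
        rw [← PBox.head_eq_head_and_col_eq_iff (c := d) (d := w)]
        exact and_congr_right fun _ => by omega
      simp only [ite_mul, zero_mul, hdw, Finset.sum_ite_eq', Finset.mem_univ, if_true, if_pos hc]
    · rw [if_neg hc]
      exact Finset.sum_eq_zero fun d _ => by rw [if_neg fun h => hc (by omega), zero_mul]
  · simp only [ite_and, ite_mul, zero_mul, Finset.sum_ite_eq', Finset.mem_univ, if_true]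
    refine Finset.sum_congr rfl fun d _ => ?_
    split_ifs with hd
    · rw [PBox.head_eq_self_iff.2 hd, mul_comm]
    · have : b d w.head = 0 := not_not.1 fun h => hd (strings_of_b_ne_zero hb hmax h).1.2
      rw [this, mul_zero]

include ha in
lemma sum_a_mul_kirillovDual (hmax : ∀ i, p i ≤ q) (hq : 2 ≤ q) (u w : PBox s p r)
    {u' w' : PBox s p r} (hw' : pdeg w' = 1 - q) :
    (∑ c, if (c.2.2 : ℕ) + 2 = q then a u' c.head * kirillovDual a b u w c w' else 0) =
      if w'.head = u then (a * b) u' w.head else 0 := by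
  obtain ⟨hpw', hw'1⟩ := (pdeg_eq_one_sub_iff hmax).1 hw'
  have hterm (c : PBox s p r) :
      (if (c.2.2 : ℕ) + 2 = q then a u' c.head * kirillovDual a b u w c w' else 0) =
        if (c.2.2 : ℕ) = q - 2 then
          (if w'.head = u then a u' c.head * b c.head w.head else 0) else 0 := by
    by_cases hc : (c.2.2 : ℕ) + 2 = q
    · rw [if_pos hc, if_pos (by omega), kirillovDual_apply,
        if_neg (fun h : _ ∧ (c.2.2 : ℕ) = w'.2.2 => by omega), add_zero, mul_ite, mul_zero]
      exact if_congr (and_iff_left (by omega)) rfl rfl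
    · rw [if_neg hc, if_neg (by omega)]
  rw [Finset.sum_congr rfl fun c _ => hterm c]
  split_ifs with hwu
  · rw [sum_ite_col_eq_apply_head (fun e => a u' e * b e w.head), mul_apply]
    intro e he
    have := strings_of_a_ne_zero ha hmax (left_ne_zero_of_mul he)
    omega
  · simp

include hb in
lemma sum_kirillovDual_mul_b (hmax : ∀ i, p i ≤ q) (u w : PBox s p r) {u' w' : PBox s p r}
    (hu' : pdeg u' = q - 1) :
    ∑ c, kirillovDual a b u w u' c * b c w'.head =
      if u' = w.head then (a * b) u w'.head else 0 := by
  have hu'0 := ((pdeg_eq_sub_one_iff hmax).1 hu').2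
  have hterm (c : PBox s p r) : kirillovDual a b u w u' c * b c w'.head =
      if u' = w.head then a u c * b c w'.head else 0 := by
    by_cases hbc : b c w'.head = 0
    · simp [hbc]
    obtain ⟨⟨-, hc0⟩, -⟩ := strings_of_b_ne_zero hb hmax hbc
    rw [kirillovDual_apply, if_neg (fun h : _ ∧ (u'.2.2 : ℕ) + 1 = c.2.2 => by omega), zero_add]
    simp only [PBox.head_eq_self_iff.2 hc0, PBox.head_eq_self_iff.2 hu'0, hu'0, hc0, and_true,
      ite_mul, zero_mul]
  rw [Finset.sum_congr rfl fun c _ => hterm c]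
  split_ifs <;> simp [mul_apply]

include ha hb in
lemma lie_elementE_kirillovDual_apply (hmax : ∀ i, p i ≤ q) (hq : 2 ≤ q) (u w : PBox s p r)
    {u' w' : PBox s p r} (hu' : pdeg u' = q - 1) (hw' : pdeg w' = 1 - q) :
    (elementE q a b * kirillovDual a b u w - kirillovDual a b u w * elementE q a b) u' w' =
      (if w'.head = u then (a * b) u' w.head else 0) -
        if u' = w.head then (a * b) u w'.head else 0 := by
  rw [lie_elementE_apply ha hb hmax hq hu' hw', sum_a_mul_kirillovDual ha hmax hq u w hw',
    sum_kirillovDual_mul_b hb hmax u w hu']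

include ha hb in
lemma pdeg_eq_of_mul_apply_ne_zero {u v : PBox s p r} (h : (a * b) u v ≠ 0) :
    pdeg u = (q : ℤ) - 1 ∧ pdeg v = (q : ℤ) - 1 := by
  obtain ⟨e, -, he⟩ := Finset.exists_ne_zero_of_sum_ne_zero h
  exact ⟨(ha u e (left_ne_zero_of_mul he)).1, (hb e v (right_ne_zero_of_mul he)).2⟩

lemma smul_projDeg_apply (lam : F) (k : ℤ) (u v : PBox s p r) :
    (lam • projDeg p r k : Matrix (PBox s p r) (PBox s p r) F) u v =
      if u = v ∧ pdeg v = k then lam else 0 := by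
  simp [projDeg]

lemma exists_head_eq_of_pdeg_eq_sub_one (hmax : ∀ i, p i ≤ q) {y : PBox s p r}
    (hy : pdeg y = q - 1) : ∃ y' : PBox s p r, pdeg y' = 1 - q ∧ y'.head = y := by
  obtain ⟨hpy, hy0⟩ := (pdeg_eq_sub_one_iff hmax).1 hy
  exact ⟨y.withCol (q - 1) (by omega), (pdeg_eq_one_sub_iff hmax).2 ⟨hpy, by simp; omega⟩,
    PBox.head_eq_self_iff.2 hy0⟩

-- With `u = head w' = τ` and `head w = y`, the relation reads `(a b) x y = [x = y] (a b) τ τ`.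
include ha hb in
lemma exists_mul_eq_smul_projDeg (hmax : ∀ i, p i ≤ q)
    (hrel : ∀ {u w u' w' : PBox s p r}, pdeg u = q - 1 → pdeg w = 1 - q → pdeg u' = q - 1 →
      pdeg w' = 1 - q → (if w'.head = u then (a * b) u' w.head else 0) =
        if u' = w.head then (a * b) u w'.head else 0) :
    ∃ lam : F, a * b = lam • projDeg p r ((q : ℤ) - 1) := by
  by_cases hV : ∃ τ : PBox s p r, pdeg τ = q - 1
  · obtain ⟨τ, hτ⟩ := hV
    obtain ⟨τ', hτ', hτ'τ⟩ := exists_head_eq_of_pdeg_eq_sub_one hmax hτ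
    refine ⟨(a * b) τ τ, ?_⟩
    ext x y
    rw [smul_projDeg_apply]
    by_cases hxy : pdeg x = q - 1 ∧ pdeg y = q - 1
    · obtain ⟨y', hy', hy'y⟩ := exists_head_eq_of_pdeg_eq_sub_one hmax hxy.2
      have := hrel hτ hy' hxy.1 hτ'
      rw [hτ'τ, if_pos rfl, hy'y] at this
      rw [this]
      exact if_congr (and_iff_left hxy.2).symm rfl rfl
    · rw [if_neg fun h : x = y ∧ _ => hxy ⟨h.1 ▸ h.2, h.2⟩]
      by_contra hne
      exact hxy (pdeg_eq_of_mul_apply_ne_zero ha hb hne)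
  · refine ⟨0, ?_⟩
    ext x y
    rw [zero_smul, Matrix.zero_apply]
    by_contra hne
    exact hV ⟨x, (pdeg_eq_of_mul_apply_ne_zero ha hb hne).1⟩

include ha hb in
lemma commute_kirillovDual_of_mul_eq_smul_projDeg (hmax : ∀ i, p i ≤ q) (hq : 2 ≤ q) {lam : F}
    (hab : a * b = lam • projDeg p r ((q : ℤ) - 1)) {u w : PBox s p r} (hu : pdeg u = q - 1)
    (hw : pdeg w = 1 - q) :
    elementE q a b * kirillovDual a b u w = kirillovDual a b u w * elementE q a b := by
  have hlie := lie_elementE_mem_degreePart ha hb hq (kirillovDual_mem_degreePart ha hb hmax hu hw)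
  have hhead {v : PBox s p r} (hv : pdeg v = 1 - q) : pdeg v.head = q - 1 :=
    (pdeg_eq_sub_one_iff hmax).2 ⟨((pdeg_eq_one_sub_iff hmax).1 hv).1, rfl⟩
  rw [← sub_eq_zero]
  ext u' w'
  by_cases hblock : pdeg u' = q - 1 ∧ pdeg w' = 1 - q
  · rw [lie_elementE_kirillovDual_apply ha hb hmax hq u w hblock.1 hblock.2, hab,
      smul_projDeg_apply, smul_projDeg_apply, Matrix.zero_apply]
    simp only [hhead hw, hhead hblock.2, and_true, @eq_comm _ w'.head u]
    by_cases h1 : u = w'.head <;> by_cases h2 : u' = w.head <;> simp [h1, h2]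
  · exact apply_eq_zero_of_mem_degreePart_top hmax hlie hblock

include ha hb in
lemma commute_kirillovDual_iff_exists_smul_projDeg (hmax : ∀ i, p i ≤ q) (hq : 2 ≤ q) :
    (∀ u w : PBox s p r, pdeg u = q - 1 → pdeg w = 1 - q →
        elementE q a b * kirillovDual a b u w = kirillovDual a b u w * elementE q a b) ↔
      ∃ lam : F, a * b = lam • projDeg p r ((q : ℤ) - 1) := by
  refine ⟨fun h => exists_mul_eq_smul_projDeg ha hb hmax fun {u w u' w'} hu hw hu' hw' => ?_,
    fun ⟨lam, hab⟩ u w hu hw => commute_kirillovDual_of_mul_eq_smul_projDeg ha hb hmax hq hab hu hw⟩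
  refine sub_eq_zero.1 ((lie_elementE_kirillovDual_apply ha hb hmax hq u w hu' hw').symm.trans ?_)
  simp only [h u w hu hw, sub_self, Matrix.zero_apply]

include ha hb in
lemma coisotropic_centralizer_iff (hmax : ∀ i, p i ≤ q) (hq : 2 ≤ q) :
    (∀ x ∈ degreePart p r 1, (∀ z ∈ degreePart p r 1,
        elementE q a b * z = z * elementE q a b → kirillovForm p r x z = 0) →
        elementE q a b * x = x * elementE q a b) ↔
      ∀ u w : PBox s p r, pdeg u = q - 1 → pdeg w = 1 - q →
        elementE q a b * kirillovDual a b u w = kirillovDual a b u w * elementE q a b := by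
  let g₁ := degreePart (F := F) p r 1
  let Φ := lieCoord (elementE q a b) ∘ₗ g₁.subtype
  let X : PBox s p r × PBox s p r → g₁ := fun i =>
    if h : pdeg i.1 = q - 1 ∧ pdeg i.2 = 1 - q then
      ⟨kirillovDual a b i.1 i.2, kirillovDual_mem_degreePart ha hb hmax h.1 h.2⟩ else 0
  have hω : ((kirillovForm p r).compl₁₂ g₁.subtype g₁.subtype).SeparatingLeft := fun x hx =>
    Subtype.ext (eq_zero_of_forall_kirillovForm_eq_zero x.2 fun z hz => hx ⟨z, hz⟩)
  have hX (i) (z : g₁) : (kirillovForm p r).compl₁₂ g₁.subtype g₁.subtype (X i) z = Φ z i := by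
    simp only [X]
    split_ifs with h
    · exact kirillovForm_kirillovDual ha hb hmax hq h.1 h.2 z
    · rw [map_zero, LinearMap.zero_apply]
      exact (apply_eq_zero_of_mem_degreePart_top hmax
        (lie_elementE_mem_degreePart ha hb hq z.2) h).symm
  refine Iff.trans ?_ ((hω.orthogonal_ker_le_ker_iff Φ X hX).trans ?_)
  · simp only [Subtype.forall]
    exact forall₂_congr fun x hx => imp_congr (forall₂_congr fun z hz =>
      imp_congr lieCoord_eq_zero_iff.symm Iff.rfl) lieCoord_eq_zero_iff.symm
  · simp only [Prod.forall]
    refine forall₂_congr fun u w => ?_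
    by_cases h : pdeg u = q - 1 ∧ pdeg w = 1 - q
    · simp only [X, dif_pos h, h, true_implies]
      exact lieCoord_eq_zero_iff
    · simp only [X, dif_neg h, map_zero, true_iff]
      exact fun hu hw => absurd ⟨hu, hw⟩ h

end Centralizer

/-- Let `f ∈ gl_N` be nilpotent of depth `d = 2D` (`D = p₁ − 1`),
and let `E = a (fᵀ)^{D-1} + b (fᵀ)^D ∈ g_{d-1}` with `a ∈ Hom(V[D-1], V[D])` and
`b ∈ Hom(V[D], V[D-1])`.  Then the centralizer of `E` in `g_1` is coisotropic with
respect to `ω(x,y) = tr (f [x,y])` if and only if `a b = λ · 1_{V[D]}` for some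
scalar `λ`. -/
theorem coisotropic_iff_ab_scalar
    {s : ℕ} (hs : 0 < s) (p r : Fin s → ℕ) (hp : StrictAnti p)
    (hp1 : 2 ≤ p ⟨0, hs⟩)
    (a b : Matrix (PBox s p r) (PBox s p r) F)
    (ha : ∀ b' b0 : PBox s p r, a b' b0 ≠ 0 →
      pdeg b' = ((p ⟨0, hs⟩ : ℤ) - 1) ∧ pdeg b0 = ((p ⟨0, hs⟩ : ℤ) - 1) - 1)
    (hb : ∀ b' b0 : PBox s p r, b b' b0 ≠ 0 →
      pdeg b' = ((p ⟨0, hs⟩ : ℤ) - 1) - 1 ∧ pdeg b0 = ((p ⟨0, hs⟩ : ℤ) - 1)) :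
    (∀ x : Matrix (PBox s p r) (PBox s p r) F,
        (∀ b' b0 : PBox s p r, pdeg b' - pdeg b0 ≠ 1 → x b' b0 = 0) →
        (∀ z : Matrix (PBox s p r) (PBox s p r) F,
          (∀ b' b0 : PBox s p r, pdeg b' - pdeg b0 ≠ 1 → z b' b0 = 0) →
          (a * shiftR p r ^ (p ⟨0, hs⟩ - 2) + b * shiftR p r ^ (p ⟨0, hs⟩ - 1)) * z =
            z * (a * shiftR p r ^ (p ⟨0, hs⟩ - 2) + b * shiftR p r ^ (p ⟨0, hs⟩ - 1)) →
          Matrix.trace (shiftL p r * (x * z - z * x)) = 0) →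
        (a * shiftR p r ^ (p ⟨0, hs⟩ - 2) + b * shiftR p r ^ (p ⟨0, hs⟩ - 1)) * x =
          x * (a * shiftR p r ^ (p ⟨0, hs⟩ - 2) + b * shiftR p r ^ (p ⟨0, hs⟩ - 1)))
      ↔ ∃ lam : F, a * b = lam • projDeg p r ((p ⟨0, hs⟩ : ℤ) - 1) := by
  have hmax (i : Fin s) : p i ≤ p ⟨0, hs⟩ := hp.antitone (Nat.zero_le (i : ℕ))
  exact (coisotropic_centralizer_iff ha hb hmax hp1).trans
    (commute_kirillovDual_iff_exists_smul_projDeg ha hb hmax hp1)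
end

section
/- Let V be an F-vector space with a bilinear form defined on a pyramid basis by ⟨e_α|e_β⟩ = ε_α δ_{α,β'}, where β' is the reflection of box β in its rectangle and ε : I → {±1} satisfies ε_α ε_{α'} = η and ε_α ε_β = −1 for horizontally adjacent boxes α,β. Then the form satisfies ⟨v|w⟩ = η⟨w|v⟩ for all v,w ∈ V; the left-shift operator f and the right-shift operator f^T are skew-adjoint with respect to this form; and the adjoint of the elementary matrix E_{α,β} is ε_α ε_β E_{β',α'}. -/
open Matrix

variable {F : Type*} [Field F]

/-- The reflection `α ↦ α'` of a box with respect to the center of its rectangle. -/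
def reflect {s : ℕ} {p r : Fin s → ℕ} (b : PBox s p r) : PBox s p r :=
  ⟨b.1, (b.2.1.rev, b.2.2.rev)⟩

/-- The Gram matrix of the bilinear form `⟨e_α | e_β⟩ = ε_α δ_{α,β'}`. -/
def formM {s : ℕ} (p r : Fin s → ℕ) (ε : PBox s p r → F) :
    Matrix (PBox s p r) (PBox s p r) F :=
  fun α β => if β = reflect α then ε α else 0

/-
Writing `M` for the Gram matrix, `⟨A v | w⟩ = ⟨v | B w⟩` for all `v, w` as soon as
`Aᵀ M = M B`. Since `M` is monomial with entries `ε_α`, and `ε_{α'} = η ε_α`, one computes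
that `B = A†` has entries `A†_{x y} = ε_x ε_y A_{y' x'}`. The shifts commute with the central
reflection in this sense (`f_{y' x'} = f_{x y}`), and their nonzero entries join horizontally
adjacent boxes, where `ε_x ε_y = -1`; hence `f† = -f`. For `E_{α,β}` the formula gives
`ε_{β'} ε_{α'} E_{β',α'}`, and `ε_{α'} ε_{β'} = η² ε_α ε_β = ε_α ε_β`.
-/

section Bilinear

variable {n R : Type*} [Fintype n] [CommSemiring R]

theorem mulVec_dotProduct_mulVec_of_transpose_mul_eq {M A B : Matrix n n R}
    (h : Aᵀ * M = M * B) (v w : n → R) :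
    (A *ᵥ v) ⬝ᵥ (M *ᵥ w) = v ⬝ᵥ (M *ᵥ (B *ᵥ w)) := by
  rw [← vecMul_transpose, ← dotProduct_mulVec, mulVec_mulVec, h, ← mulVec_mulVec]

theorem dotProduct_mulVec_comm_of_transpose_eq_smul {M : Matrix n n R} {η : R}
    (h : Mᵀ = η • M) (v w : n → R) :
    v ⬝ᵥ (M *ᵥ w) = η * (w ⬝ᵥ (M *ᵥ v)) := by
  rw [dotProduct_comm, ← vecMul_transpose, ← dotProduct_mulVec, h, smul_mulVec,
    dotProduct_smul, smul_eq_mul]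

end Bilinear

section Pyramid

variable {s : ℕ} {p r : Fin s → ℕ}

@[simp]
theorem reflect_reflect (b : PBox s p r) : reflect (reflect b) = b := by
  rcases b with ⟨i, j, k⟩
  simp [reflect]

theorem reflect_involutive : Function.Involutive (reflect : PBox s p r → PBox s p r) :=
  reflect_reflect

theorem eq_reflect_comm {x y : PBox s p r} : x = reflect y ↔ y = reflect x :=
  reflect_involutive.eq_iff.symm.trans eq_comm

theorem shiftL_reflect_reflect (x y : PBox s p r) :
    shiftL (F := F) p r (reflect y) (reflect x) = shiftL p r x y := by
  rcases x with ⟨i, j, k⟩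
  rcases y with ⟨i', j', k'⟩
  have := k.isLt
  have := k'.isLt
  simp only [shiftL, reflect, Fin.val_rev]
  congr 1
  apply propext
  constructor <;> rintro ⟨rfl, hj, hk⟩ <;> exact ⟨rfl, by omega, by omega⟩

theorem shiftR_eq_transpose_shiftL : shiftR (F := F) p r = (shiftL p r)ᵀ := by
  ext x y
  simp only [shiftR, shiftL, transpose_apply, eq_comm]

variable {ε : PBox s p r → F}

theorem formM_mul_apply (A : Matrix (PBox s p r) (PBox s p r) F) (x y : PBox s p r) :
    (formM p r ε * A) x y = ε x * A (reflect x) y := by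
  simp [mul_apply, formM, ite_mul]

theorem transpose_mul_formM_apply (A : Matrix (PBox s p r) (PBox s p r) F)
    (x y : PBox s p r) :
    (Aᵀ * formM p r ε) x y = A (reflect y) x * ε (reflect y) := by
  simp [mul_apply, formM, eq_reflect_comm (x := y)]

def formAdjoint (ε : PBox s p r → F) (A : Matrix (PBox s p r) (PBox s p r) F) :
    Matrix (PBox s p r) (PBox s p r) F :=
  of fun x y => ε x * ε y * A (reflect y) (reflect x)

theorem formAdjoint_apply (A : Matrix (PBox s p r) (PBox s p r) F) (x y : PBox s p r) :
    formAdjoint ε A x y = ε x * ε y * A (reflect y) (reflect x) :=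
  rfl

theorem formAdjoint_transpose (A : Matrix (PBox s p r) (PBox s p r) F) :
    formAdjoint ε Aᵀ = (formAdjoint ε A)ᵀ := by
  ext x y
  simp only [formAdjoint_apply, transpose_apply, mul_comm (ε x)]

theorem formAdjoint_eq_neg {A : Matrix (PBox s p r) (PBox s p r) F}
    (hA : ∀ x y, A (reflect y) (reflect x) = A x y)
    (hε : ∀ x y, A x y ≠ 0 → ε x * ε y = -1) :
    formAdjoint ε A = -A := by
  ext x y
  rw [formAdjoint_apply, hA, neg_apply]
  by_cases h : A x y = 0
  · simp [h]
  · rw [hε x y h]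
    ring

section Adjacent

variable (hε2 : ∀ (i : Fin s) (j : Fin (r i)) (k k' : Fin (p i)),
  (k : ℕ) + 1 = (k' : ℕ) → ε ⟨i, (j, k)⟩ * ε ⟨i, (j, k')⟩ = -1)
include hε2

theorem eps_mul_eps_of_shiftL_ne_zero {x y : PBox s p r} (h : shiftL (F := F) p r x y ≠ 0) :
    ε x * ε y = -1 := by
  rcases x with ⟨i, j, k⟩
  rcases y with ⟨i', j', k'⟩
  simp only [shiftL, ne_eq, ite_eq_right_iff, one_ne_zero, imp_false, not_not] at h
  obtain ⟨rfl, hj, hk⟩ := h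
  obtain rfl := Fin.ext hj
  rw [mul_comm]
  exact hε2 i j k' k hk.symm

theorem formAdjoint_shiftL : formAdjoint ε (shiftL p r) = -shiftL p r :=
  formAdjoint_eq_neg shiftL_reflect_reflect fun _ _ => eps_mul_eps_of_shiftL_ne_zero hε2

theorem formAdjoint_shiftR : formAdjoint ε (shiftR p r) = -shiftR p r := by
  rw [shiftR_eq_transpose_shiftL, formAdjoint_transpose, formAdjoint_shiftL hε2, transpose_neg]

end Adjacent

section Sign

variable {η : F} (hε0 : ∀ α : PBox s p r, ε α = 1 ∨ ε α = -1)
  (hε1 : ∀ α : PBox s p r, ε α * ε (reflect α) = η)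
include hε0 hε1

theorem eps_reflect (α : PBox s p r) : ε (reflect α) = η * ε α := by
  linear_combination ε α * hε1 α - ε (reflect α) * mul_self_eq_one_iff.mpr (hε0 α)

theorem eps_reflect_mul_eps_reflect (α β : PBox s p r) :
    ε (reflect α) * ε (reflect β) = ε α * ε β := by
  linear_combination ε α * ε (reflect β) * (hε1 α - hε1 β)
    - ε (reflect α) * ε (reflect β) * mul_self_eq_one_iff.mpr (hε0 α)
    + ε α * ε β * mul_self_eq_one_iff.mpr (hε0 (reflect β))

theorem formM_transpose : (formM p r ε)ᵀ = η • formM p r ε := by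
  ext x y
  simp only [transpose_apply, Matrix.smul_apply, formM, smul_eq_mul, mul_ite, mul_zero,
    eq_reflect_comm (x := x)]
  split_ifs with h
  · rw [h, eps_reflect hε0 hε1]
  · rfl

theorem transpose_mul_formM_eq_formM_mul_formAdjoint (A : Matrix (PBox s p r) (PBox s p r) F) :
    Aᵀ * formM p r ε = formM p r ε * formAdjoint ε A := by
  ext x y
  rw [transpose_mul_formM_apply, formM_mul_apply, formAdjoint_apply, reflect_reflect,
    eps_reflect hε0 hε1 x, eps_reflect hε0 hε1 y]
  linear_combination -(η * ε y * A (reflect y) x) * mul_self_eq_one_iff.mpr (hε0 x)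

theorem formAdjoint_single (α β : PBox s p r) :
    formAdjoint ε (single α β (1 : F)) = (ε α * ε β) • single (reflect β) (reflect α) 1 := by
  ext x y
  simp only [formAdjoint_apply, single_apply, Matrix.smul_apply, smul_eq_mul, mul_ite, mul_one,
    mul_zero]
  by_cases h : reflect β = x ∧ reflect α = y
  · obtain ⟨rfl, rfl⟩ := h
    simp [eps_reflect_mul_eps_reflect hε0 hε1 β α, mul_comm]
  · rw [if_neg h, if_neg]
    rintro ⟨rfl, rfl⟩
    simp at h

end Sign

end Pyramid

theorem pyramid_form_properties_general
    {s : ℕ} (p r : Fin s → ℕ)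
    (η : F)
    (ε : PBox s p r → F)
    (hε0 : ∀ α : PBox s p r, ε α = 1 ∨ ε α = -1)
    (hε1 : ∀ α : PBox s p r, ε α * ε (reflect α) = η)
    (hε2 : ∀ (i : Fin s) (j : Fin (r i)) (k k' : Fin (p i)),
      (k : ℕ) + 1 = (k' : ℕ) →
      ε ⟨i, (j, k)⟩ * ε ⟨i, (j, k')⟩ = -1) :
    (∀ v w : PBox s p r → F,
      v ⬝ᵥ (formM p r ε *ᵥ w) = η * (w ⬝ᵥ (formM p r ε *ᵥ v))) ∧
    (∀ v w : PBox s p r → F,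
      (shiftL (F := F) p r *ᵥ v) ⬝ᵥ (formM p r ε *ᵥ w) =
        -(v ⬝ᵥ (formM p r ε *ᵥ (shiftL (F := F) p r *ᵥ w)))) ∧
    (∀ v w : PBox s p r → F,
      (shiftR (F := F) p r *ᵥ v) ⬝ᵥ (formM p r ε *ᵥ w) =
        -(v ⬝ᵥ (formM p r ε *ᵥ (shiftR (F := F) p r *ᵥ w)))) ∧
    (∀ (α β : PBox s p r) (v w : PBox s p r → F),
      (Matrix.single α β (1 : F) *ᵥ v) ⬝ᵥ (formM p r ε *ᵥ w) =
        v ⬝ᵥ (formM p r ε *ᵥ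
          (((ε α * ε β) • Matrix.single (reflect β) (reflect α) (1 : F)) *ᵥ w))) := by
  have hadj := transpose_mul_formM_eq_formM_mul_formAdjoint hε0 hε1
  refine ⟨dotProduct_mulVec_comm_of_transpose_eq_smul (formM_transpose hε0 hε1), ?_, ?_,
    fun α β => ?_⟩
  · intro v w
    rw [mulVec_dotProduct_mulVec_of_transpose_mul_eq (hadj _), formAdjoint_shiftL hε2,
      neg_mulVec, mulVec_neg, dotProduct_neg]
  · intro v w
    rw [mulVec_dotProduct_mulVec_of_transpose_mul_eq (hadj _), formAdjoint_shiftR hε2,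
      neg_mulVec, mulVec_neg, dotProduct_neg]
  · rw [← formAdjoint_single hε0 hε1]
    exact mulVec_dotProduct_mulVec_of_transpose_mul_eq (hadj _)

/-- With `ε : I → {±1}` satisfying `ε_α ε_{α'} = η` and
`ε_α ε_β = −1` for horizontally adjacent boxes, the bilinear form
`⟨e_α|e_β⟩ = ε_α δ_{α,β'}` is `η`-symmetric, the shift operators `f` and `fᵀ` are
skew-adjoint with respect to it, and the adjoint of `E_{α,β}` is
`ε_α ε_β E_{β',α'}`. -/
theorem pyramid_form_properties
    {s : ℕ} (p r : Fin s → ℕ)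
    (η : F) (hη : η = 1 ∨ η = -1)
    (ε : PBox s p r → F)
    (hε0 : ∀ α : PBox s p r, ε α = 1 ∨ ε α = -1)
    (hε1 : ∀ α : PBox s p r, ε α * ε (reflect α) = η)
    (hε2 : ∀ (i : Fin s) (j : Fin (r i)) (k k' : Fin (p i)),
      (k : ℕ) + 1 = (k' : ℕ) →
      ε ⟨i, (j, k)⟩ * ε ⟨i, (j, k')⟩ = -1) :
    (∀ v w : PBox s p r → F,
      v ⬝ᵥ (formM p r ε *ᵥ w) = η * (w ⬝ᵥ (formM p r ε *ᵥ v))) ∧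
    (∀ v w : PBox s p r → F,
      (shiftL (F := F) p r *ᵥ v) ⬝ᵥ (formM p r ε *ᵥ w) =
        -(v ⬝ᵥ (formM p r ε *ᵥ (shiftL (F := F) p r *ᵥ w)))) ∧
    (∀ v w : PBox s p r → F,
      (shiftR (F := F) p r *ᵥ v) ⬝ᵥ (formM p r ε *ᵥ w) =
        -(v ⬝ᵥ (formM p r ε *ᵥ (shiftR (F := F) p r *ᵥ w)))) ∧
    (∀ (α β : PBox s p r) (v w : PBox s p r → F),
      (Matrix.single α β (1 : F) *ᵥ v) ⬝ᵥ (formM p r ε *ᵥ w) =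
        v ⬝ᵥ (formM p r ε *ᵥ
          (((ε α * ε β) • Matrix.single (reflect β) (reflect α) (1 : F)) *ᵥ w))) :=
  pyramid_form_properties_general p r η ε hε0 hε1 hε2
end
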